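/- arXiv:2507.13172 — 6 statements merged into one kernel-verified Lean document; each statement's English description precedes it below -/
import Mathlib

section
/- There exists a constant α₁ > 0, depending only on N, p, q, C_p, C_q and S, with the following property: for all a, b > 0 with T_{a,b} < α₁, the function h_{a,b} admits exactly two critical points in (0,∞) — at the smaller critical point h_{a,b} has a local minimum with negative value, and at the larger critical point h_{a,b} attains its global maximum over (0,∞), with positive value. Furthermore, there exist unique numbers 0 < R₀ < R₁ such that h_{a,b}(R₀) = h_{a,b}(R₁) = 0, and h_{a,b}(t) > 0 if and only if t ∈ (R₀, R₁). -/
/-!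
Write `h(t) = t² (1/2 - D₁ t^(γ_p-2) - D₂ t^(γ_q-2) - D₃ t^(2*-2))` and `h'(t) = t ψ(t)`, where
`ψ(t) = 1 - Σ γ D t^(γ-2)` is a bracket of the same form. Substituting `x = t^(2-γ_p)` and
dividing by `t^(γ_p-2)` turns either bracket into a strictly concave function of `x` that is
negative at `x = 0` and at infinity; once it is positive somewhere, it is positive exactly on an
open interval and negative on the rest of `(0,∞)`. Smallness of `T_{a,b}` makes `h` positive at
one explicit point, the mean value theorem then makes `ψ` positive somewhere, and the sign pattern
of `ψ` gives the decreasing–increasing–decreasing shape of `h`.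
-/
open Real

/-- `γ_s = N(s-2)/2`. -/
noncomputable def gam (N : ℕ) (s : ℝ) : ℝ := (N : ℝ) * (s - 2) / 2

/-- The critical Sobolev exponent `2* = 2N/(N-2)`. -/
noncomputable def twoStar (N : ℕ) : ℝ := 2 * (N : ℝ) / ((N : ℝ) - 2)

/-- The function `h_{a,b}`. -/
noncomputable def hab (N : ℕ) (p q Cp Cq S μ₁ μ₂ ν a b t : ℝ) : ℝ :=
  (1 / 2) * t ^ 2
    - (μ₁ / p * Cp * a ^ ((p - gam N p) / 2)) * t ^ (gam N p)
    - (μ₂ / q * Cq * b ^ ((q - gam N q) / 2)) * t ^ (gam N q)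
    - ν * S ^ (-(twoStar N / 2)) * t ^ (twoStar N)

/-- The quantity `T_{a,b}`. -/
noncomputable def Tab (N : ℕ) (p q μ₁ μ₂ ν a b : ℝ) : ℝ :=
  μ₂ * b ^ ((q - gam N q) / 2) *
      (μ₁ * a ^ ((p - gam N p) / 2)) ^ ((gam N q - 2) / (2 - gam N p))
    + ν * (μ₁ * a ^ ((p - gam N p) / 2)) ^ ((twoStar N - 2) / (2 - gam N p))

open Set

structure PosExactlyBetween (f : ℝ → ℝ) (x₁ x₂ : ℝ) : Prop where
  pos : 0 < x₁
  lt : x₁ < x₂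
  pos_iff : ∀ t, 0 < t → (0 < f t ↔ x₁ < t ∧ t < x₂)
  neg_iff : ∀ t, 0 < t → (f t < 0 ↔ t < x₁ ∨ x₂ < t)

namespace PosExactlyBetween

variable {f g w : ℝ → ℝ} {x₁ x₂ : ℝ}

lemma of_sign (h₀ : 0 < x₁) (h₁₂ : x₁ < x₂) (hleft : ∀ t, 0 < t → t < x₁ → f t < 0)
    (hx₁ : f x₁ = 0) (hmid : ∀ t, x₁ < t → t < x₂ → 0 < f t) (hx₂ : f x₂ = 0)
    (hright : ∀ t, x₂ < t → f t < 0) : PosExactlyBetween f x₁ x₂ := by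
  refine ⟨h₀, h₁₂, fun t ht => ?_, fun t ht => ?_⟩ <;>
  · rcases lt_trichotomy t x₁ with h | rfl | h
    · grind
    · grind
    rcases lt_trichotomy t x₂ with h' | rfl | h' <;> grind

lemma eq_zero_iff (hf : PosExactlyBetween f x₁ x₂) {t : ℝ} (ht : 0 < t) :
    f t = 0 ↔ t = x₁ ∨ t = x₂ := by
  have := hf.pos_iff t ht
  have := hf.neg_iff t ht
  have := hf.lt
  grind

lemma of_pos_mul (hf : PosExactlyBetween f x₁ x₂) (hw : ∀ t, 0 < t → 0 < w t)
    (hg : ∀ t, 0 < t → g t = w t * f t) : PosExactlyBetween g x₁ x₂ where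
  pos := hf.pos
  lt := hf.lt
  pos_iff t ht := by rw [hg t ht, mul_pos_iff_of_pos_left (hw t ht), hf.pos_iff t ht]
  neg_iff t ht := by
    rw [hg t ht, ← hf.neg_iff t ht]
    exact ⟨fun h => neg_of_mul_neg_right h (hw t ht).le, mul_neg_of_pos_of_neg (hw t ht)⟩

lemma comp_rpow (hf : PosExactlyBetween f x₁ x₂) {e : ℝ} (he : 0 < e) :
    PosExactlyBetween (fun t => f (t ^ e)) (x₁ ^ e⁻¹) (x₂ ^ e⁻¹) := by
  have h₁ := hf.pos.le
  have h₂ := h₁.trans hf.lt.le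
  refine ⟨Real.rpow_pos_of_pos hf.pos _, Real.rpow_lt_rpow h₁ hf.lt (inv_pos.2 he),
    fun t ht => ?_, fun t ht => ?_⟩
  · rw [hf.pos_iff _ (Real.rpow_pos_of_pos ht e), Real.rpow_inv_lt_iff_of_pos h₁ ht.le he,
      Real.lt_rpow_inv_iff_of_pos ht.le h₂ he]
  · rw [hf.neg_iff _ (Real.rpow_pos_of_pos ht e), Real.rpow_inv_lt_iff_of_pos h₂ ht.le he,
      Real.lt_rpow_inv_iff_of_pos ht.le h₁ he]

lemma existsUnique (hf : PosExactlyBetween f x₁ x₂) :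
    ∃! P : ℝ × ℝ, 0 < P.1 ∧ P.1 < P.2 ∧ f P.1 = 0 ∧ f P.2 = 0 ∧
      ∀ t, 0 < t → (0 < f t ↔ P.1 < t ∧ t < P.2) := by
  refine ⟨(x₁, x₂), ⟨hf.pos, hf.lt, (hf.eq_zero_iff hf.pos).2 (.inl rfl),
    (hf.eq_zero_iff (hf.pos.trans hf.lt)).2 (.inr rfl), hf.pos_iff⟩, ?_⟩
  rintro ⟨y₁, y₂⟩ ⟨hy₁, hy, hfy₁, hfy₂, -⟩
  have h₁ := (hf.eq_zero_iff hy₁).1 hfy₁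
  have h₂ := (hf.eq_zero_iff (hy₁.trans hy)).1 hfy₂
  have := hf.lt
  simp only [Prod.mk.injEq]
  grind

end PosExactlyBetween

lemma StrictConvexOn.const_mul {s : Set ℝ} {f : ℝ → ℝ} {c : ℝ} (hc : 0 < c)
    (hf : StrictConvexOn ℝ s f) : StrictConvexOn ℝ s fun x => c * f x := by
  refine ⟨hf.1, fun x hx y hy hxy a b ha hb hab => ?_⟩
  have := mul_lt_mul_of_pos_left (hf.2 hx hy hxy ha hb hab) hc
  simp only [smul_eq_mul] at this ⊢
  linarith

lemma StrictConcaveOn.exists_posExactlyBetween {k : ℝ → ℝ} (hk : StrictConcaveOn ℝ (Ici 0) k)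
    (hcont : ContinuousOn k (Ici 0)) (h0 : k 0 < 0) {x X : ℝ} (hx : 0 < x) (hkx : 0 < k x)
    (hxX : x < X) (hkX : k X < 0) : ∃ x₁ x₂, PosExactlyBetween k x₁ x₂ := by
  obtain ⟨x₁, ⟨hx₁, hx₁x⟩, hk₁⟩ :=
    intermediate_value_Ioo hx.le (hcont.mono Icc_subset_Ici_self) ⟨h0, hkx⟩
  obtain ⟨x₂, ⟨hxx₂, -⟩, hk₂⟩ :=
    intermediate_value_Ioo' hxX.le (hcont.mono fun t ht => hx.le.trans ht.1) ⟨hkX, hkx⟩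
  have hmin : ∀ a b c, 0 ≤ a → a < b → b < c → min (k a) (k c) < k b := fun a b c ha hab hbc =>
    hk.lt_on_openSegment ha (ha.trans (hab.trans hbc).le) (hab.trans hbc).ne
      (by rw [openSegment_eq_Ioo (hab.trans hbc)]; exact ⟨hab, hbc⟩)
  refine ⟨x₁, x₂, .of_sign hx₁ (hx₁x.trans hxx₂) (fun t ht htx₁ => ?_) hk₁
    (fun t h₁ h₂ => ?_) hk₂ (fun t ht => ?_)⟩
  · have := hmin t x₁ x ht.le htx₁ hx₁x
    rw [hk₁, min_lt_iff] at this
    exact this.resolve_right hkx.not_gt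
  · simpa [hk₁, hk₂] using hmin x₁ t x₂ hx₁.le h₁ h₂
  · have := hmin x x₂ t hx.le hxx₂ ht
    rw [hk₂, min_lt_iff] at this
    exact this.resolve_left hkx.not_gt

noncomputable def constSubRpow (c d₁ d₂ d₃ a₁ a₂ a₃ t : ℝ) : ℝ :=
  c - d₁ * t ^ a₁ - d₂ * t ^ a₂ - d₃ * t ^ a₃

section constSubRpow

variable {c d₁ d₂ d₃ a₁ a₂ a₃ : ℝ}

-- With `x = t ^ (-a₁)` the exponents `a₂, a₃ ≥ 0` become `≥ 1`, so the bracket is concave in `x`.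
lemma constSubRpow_eq_rpow_mul (ha₁ : a₁ < 0) {t : ℝ} (ht : 0 < t) :
    constSubRpow c d₁ d₂ d₃ a₁ a₂ a₃ t = t ^ a₁ * (c * t ^ (-a₁) - d₁
      - d₂ * (t ^ (-a₁)) ^ ((a₂ - a₁) / -a₁) - d₃ * (t ^ (-a₁)) ^ ((a₃ - a₁) / -a₁)) := by
  have hpow : ∀ b, (t ^ (-a₁)) ^ ((b - a₁) / -a₁) = t ^ (b - a₁) := fun b => by
    rw [← Real.rpow_mul ht.le, mul_div_cancel₀ _ (neg_ne_zero.2 ha₁.ne)]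
  have hmul : ∀ b, t ^ a₁ * t ^ (b - a₁) = t ^ b := fun b => by
    rw [← Real.rpow_add ht, add_sub_cancel]
  have hinv : t ^ a₁ * t ^ (-a₁) = 1 := by
    rw [← Real.rpow_add ht, add_neg_cancel, Real.rpow_zero]
  rw [hpow, hpow, constSubRpow]
  linear_combination -c * hinv + d₂ * hmul a₂ + d₃ * hmul a₃

lemma exists_posExactlyBetween_constSubRpow (hd₁ : 0 < d₁) (hd₂ : 0 ≤ d₂) (hd₃ : 0 < d₃)
    (ha₁ : a₁ < 0) (ha₂ : 0 ≤ a₂) (ha₃ : 0 < a₃) {t₀ : ℝ} (ht₀ : 0 < t₀)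
    (hpos : 0 < constSubRpow c d₁ d₂ d₃ a₁ a₂ a₃ t₀) :
    ∃ x₁ x₂, PosExactlyBetween (constSubRpow c d₁ d₂ d₃ a₁ a₂ a₃) x₁ x₂ := by
  set r₂ := (a₂ - a₁) / -a₁
  set r₃ := (a₃ - a₁) / -a₁
  have he : 0 < -a₁ := neg_pos.2 ha₁
  have hr₂ : 1 ≤ r₂ := (one_le_div he).2 (by linarith)
  have hr₃ : 1 < r₃ := (one_lt_div he).2 (by linarith)
  set k : ℝ → ℝ := fun x => c * x - d₁ - d₂ * x ^ r₂ - d₃ * x ^ r₃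
  have hk : StrictConcaveOn ℝ (Ici 0) k := by
    refine ((((LinearMap.mulLeft ℝ c).concaveOn (convex_Ici 0)).add_const (-d₁)).sub_strictConvexOn
      (((convexOn_rpow hr₂).smul hd₂).add_strictConvexOn
        ((strictConvexOn_rpow hr₃).const_mul hd₃))).congr fun x _ => ?_
    simp only [k, Pi.sub_apply, Pi.add_apply, LinearMap.mulLeft_apply, smul_eq_mul]
    ring
  have hk0 : k 0 = -d₁ := by
    simp [k, Real.zero_rpow (by linarith : r₂ ≠ 0), Real.zero_rpow (by linarith : r₃ ≠ 0)]
  have hkx : 0 < k (t₀ ^ (-a₁)) := by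
    rw [constSubRpow_eq_rpow_mul ha₁ ht₀] at hpos
    exact pos_of_mul_pos_right hpos (Real.rpow_pos_of_pos ht₀ _).le
  obtain ⟨X, hX, hXx⟩ : ∃ X, c < d₃ * X ^ (r₃ - 1) ∧ t₀ ^ (-a₁) < X :=
    ((((tendsto_rpow_atTop (by linarith)).const_mul_atTop hd₃).eventually_gt_atTop c).and
      (Filter.eventually_gt_atTop _)).exists
  have hX₀ : 0 < X := (Real.rpow_pos_of_pos ht₀ _).trans hXx
  have hkX : k X < 0 := by
    have h₁ := mul_lt_mul_of_pos_left hX hX₀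
    rw [Real.rpow_sub_one hX₀.ne', ← mul_div_assoc, mul_div_cancel₀ _ hX₀.ne'] at h₁
    have h₂ : 0 ≤ d₂ * X ^ r₂ := mul_nonneg hd₂ (Real.rpow_nonneg hX₀.le _)
    simp only [k]
    linarith
  obtain ⟨x₁, x₂, hx⟩ := hk.exists_posExactlyBetween (by fun_prop (disch := linarith))
    (by linarith) (Real.rpow_pos_of_pos ht₀ _) hkx hXx hkX
  exact ⟨_, _, (hx.comp_rpow he).of_pos_mul (fun t ht => Real.rpow_pos_of_pos ht _)
    fun t ht => constSubRpow_eq_rpow_mul ha₁ ht⟩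

end constSubRpow

namespace PosExactlyBetween

variable {f ψ : ℝ → ℝ} {s τ : ℝ}

lemma exists_pos_of_hasDerivAt (hf : PosExactlyBetween f s τ) (hcont : ContinuousOn f (Ici 0))
    (hderiv : ∀ t, 0 < t → HasDerivAt f (t * ψ t) t) : ∃ t, 0 < t ∧ 0 < ψ t := by
  obtain ⟨m, hsm, hmτ⟩ := exists_between hf.lt
  have hfm : 0 < f m := (hf.pos_iff m (hf.pos.trans hsm)).2 ⟨hsm, hmτ⟩
  obtain ⟨c, hc, hslope⟩ := exists_hasDerivAt_eq_slope f (fun t => t * ψ t) hsm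
    (hcont.mono fun t ht => hf.pos.le.trans ht.1) fun t ht => hderiv t (hf.pos.trans ht.1)
  have hc₀ : 0 < c := hf.pos.trans hc.1
  rw [(hf.eq_zero_iff hf.pos).2 (.inl rfl), sub_zero] at hslope
  exact ⟨c, hc₀, pos_of_mul_pos_right (hslope ▸ div_pos hfm (sub_pos.2 hsm)) hc₀.le⟩

lemma strictAntiOn_Icc_zero (hψ : PosExactlyBetween ψ s τ) (hcont : ContinuousOn f (Ici 0))
    (hderiv : ∀ t, 0 < t → HasDerivAt f (t * ψ t) t) : StrictAntiOn f (Icc 0 s) := by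
  refine strictAntiOn_of_hasDerivWithinAt_neg (f' := fun t => t * ψ t) (convex_Icc 0 s)
    (hcont.mono Icc_subset_Ici_self) (fun t ht => ?_) fun t ht => ?_ <;> rw [interior_Icc] at ht
  · exact (hderiv t ht.1).hasDerivWithinAt
  · exact mul_neg_of_pos_of_neg ht.1 ((hψ.neg_iff t ht.1).2 (.inl ht.2))

lemma strictMonoOn_Icc (hψ : PosExactlyBetween ψ s τ) (hcont : ContinuousOn f (Ici 0))
    (hderiv : ∀ t, 0 < t → HasDerivAt f (t * ψ t) t) : StrictMonoOn f (Icc s τ) := by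
  refine strictMonoOn_of_hasDerivWithinAt_pos (f' := fun t => t * ψ t) (convex_Icc s τ)
    (hcont.mono fun t ht => hψ.pos.le.trans ht.1) (fun t ht => ?_) fun t ht => ?_ <;>
    rw [interior_Icc] at ht
  · exact (hderiv t (hψ.pos.trans ht.1)).hasDerivWithinAt
  · exact mul_pos (hψ.pos.trans ht.1) ((hψ.pos_iff t (hψ.pos.trans ht.1)).2 ht)

lemma strictAntiOn_Ici (hψ : PosExactlyBetween ψ s τ) (hcont : ContinuousOn f (Ici 0))
    (hderiv : ∀ t, 0 < t → HasDerivAt f (t * ψ t) t) : StrictAntiOn f (Ici τ) := by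
  have hτ := hψ.pos.trans hψ.lt
  refine strictAntiOn_of_hasDerivWithinAt_neg (f' := fun t => t * ψ t) (convex_Ici τ)
    (hcont.mono fun t ht => hτ.le.trans ht) (fun t ht => ?_) fun t ht => ?_ <;>
    rw [interior_Ici] at ht
  · exact (hderiv t (hτ.trans ht)).hasDerivWithinAt
  · exact mul_neg_of_pos_of_neg (hτ.trans ht) ((hψ.neg_iff t (hτ.trans ht)).2 (.inr ht))

lemma shape_of_hasDerivAt (hψ : PosExactlyBetween ψ s τ) (hcont : ContinuousOn f (Ici 0))
    (hf0 : f 0 = 0) (hderiv : ∀ t, 0 < t → HasDerivAt f (t * ψ t) t) {t₀ : ℝ} (ht₀ : 0 < t₀)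
    (hft₀ : 0 < f t₀) :
    (∀ t, 0 < t → (deriv f t = 0 ↔ t = s ∨ t = τ)) ∧ IsLocalMin f s ∧ f s < 0 ∧
      (∀ t, 0 < t → f t ≤ f τ) ∧ 0 < f τ := by
  have anti₁ := hψ.strictAntiOn_Icc_zero hcont hderiv
  have mono := hψ.strictMonoOn_Icc hcont hderiv
  have anti₂ := hψ.strictAntiOn_Ici hcont hderiv
  have hs := hψ.pos
  have hsτ := hψ.lt
  have hneg : ∀ t, 0 < t → t ≤ s → f t < 0 := fun t ht hts =>
    hf0 ▸ anti₁ (left_mem_Icc.2 hs.le) ⟨ht.le, hts⟩ ht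
  have hle : ∀ t, s ≤ t → f t ≤ f τ := fun t hst => by
    rcases le_total t τ with h | h
    · exact mono.monotoneOn ⟨hst, h⟩ (right_mem_Icc.2 hsτ.le) h
    · exact anti₂.antitoneOn self_mem_Ici h h
  have hfτ : 0 < f τ :=
    hft₀.trans_le (hle t₀ (not_lt.1 fun h => (hneg t₀ ht₀ h.le).not_gt hft₀))
  refine ⟨fun t ht => ?_, ?_, hneg s hs le_rfl, fun t ht => ?_, hfτ⟩
  · rw [(hderiv t ht).deriv, mul_eq_zero, or_iff_right ht.ne', hψ.eq_zero_iff ht]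
  · filter_upwards [Ioo_mem_nhds hs hsτ] with t ht
    rcases le_total t s with h | h
    · exact anti₁.antitoneOn ⟨ht.1.le, h⟩ (right_mem_Icc.2 hs.le) h
    · exact mono.monotoneOn (left_mem_Icc.2 hsτ.le) ⟨h, ht.2.le⟩ h
  · rcases le_total t s with h | h
    · exact (hneg t ht h).le.trans hfτ.le
    · exact hle t h

end PosExactlyBetween

noncomputable def energyProfile (γ₁ γ₂ γ₃ D₁ D₂ D₃ t : ℝ) : ℝ :=
  (1 / 2) * t ^ 2 - D₁ * t ^ γ₁ - D₂ * t ^ γ₂ - D₃ * t ^ γ₃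

section energyProfile

variable {γ₁ γ₂ γ₃ D₁ D₂ D₃ : ℝ}

lemma energyProfile_eq_sq_mul {t : ℝ} (ht : 0 < t) :
    energyProfile γ₁ γ₂ γ₃ D₁ D₂ D₃ t
      = t ^ 2 * constSubRpow (1 / 2) D₁ D₂ D₃ (γ₁ - 2) (γ₂ - 2) (γ₃ - 2) t := by
  have h : ∀ γ : ℝ, t ^ γ = t ^ 2 * t ^ (γ - 2) := fun γ => by
    rw [Real.rpow_sub ht, Real.rpow_two, mul_div_cancel₀ _ (pow_pos ht 2).ne']
  rw [energyProfile, constSubRpow, h γ₁, h γ₂, h γ₃]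
  ring

lemma hasDerivAt_energyProfile {t : ℝ} (ht : 0 < t) :
    HasDerivAt (energyProfile γ₁ γ₂ γ₃ D₁ D₂ D₃)
      (t * constSubRpow 1 (γ₁ * D₁) (γ₂ * D₂) (γ₃ * D₃) (γ₁ - 2) (γ₂ - 2) (γ₃ - 2) t) t := by
  have h : ∀ γ : ℝ, t ^ (γ - 1) = t * t ^ (γ - 2) := fun γ => by
    rw [show γ - 1 = γ - 2 + 1 by ring, Real.rpow_add_one ht.ne', mul_comm]
  have hrpow : ∀ γ D, HasDerivAt (fun x => D * x ^ γ) (D * (γ * t ^ (γ - 1))) t := fun γ D =>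
    (Real.hasDerivAt_rpow_const (.inl ht.ne')).const_mul D
  refine ((((hasDerivAt_pow 2 t).const_mul (1 / 2)).sub (hrpow γ₁ D₁)).sub
    (hrpow γ₂ D₂)).sub (hrpow γ₃ D₃) |>.congr_deriv ?_
  rw [h γ₁, h γ₂, h γ₃, constSubRpow]
  push_cast
  ring

lemma continuous_energyProfile (hγ₁ : 0 ≤ γ₁) (hγ₂ : 0 ≤ γ₂) (hγ₃ : 0 ≤ γ₃) :
    Continuous (energyProfile γ₁ γ₂ γ₃ D₁ D₂ D₃) := by
  unfold energyProfile
  fun_prop (disch := assumption)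

lemma energyProfile_zero (hγ₁ : γ₁ ≠ 0) (hγ₂ : γ₂ ≠ 0) (hγ₃ : γ₃ ≠ 0) :
    energyProfile γ₁ γ₂ γ₃ D₁ D₂ D₃ 0 = 0 := by
  simp [energyProfile, Real.zero_rpow, hγ₁, hγ₂, hγ₃]

theorem energyProfile_shape (hγ₁ : 0 < γ₁) (hγ₁₂ : γ₁ < 2) (hγ₂ : 2 ≤ γ₂) (hγ₃ : 2 < γ₃)
    (hD₁ : 0 < D₁) (hD₂ : 0 ≤ D₂) (hD₃ : 0 < D₃) {t₀ : ℝ} (ht₀ : 0 < t₀)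
    (hpos : 0 < energyProfile γ₁ γ₂ γ₃ D₁ D₂ D₃ t₀) :
    (∃ s τ : ℝ, 0 < s ∧ s < τ ∧
      (∀ t : ℝ, 0 < t →
        (deriv (energyProfile γ₁ γ₂ γ₃ D₁ D₂ D₃) t = 0 ↔ t = s ∨ t = τ)) ∧
      IsLocalMin (energyProfile γ₁ γ₂ γ₃ D₁ D₂ D₃) s ∧
      energyProfile γ₁ γ₂ γ₃ D₁ D₂ D₃ s < 0 ∧
      (∀ t : ℝ, 0 < t →
        energyProfile γ₁ γ₂ γ₃ D₁ D₂ D₃ t ≤ energyProfile γ₁ γ₂ γ₃ D₁ D₂ D₃ τ) ∧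
      0 < energyProfile γ₁ γ₂ γ₃ D₁ D₂ D₃ τ) ∧
    (∃! P : ℝ × ℝ, 0 < P.1 ∧ P.1 < P.2 ∧
      energyProfile γ₁ γ₂ γ₃ D₁ D₂ D₃ P.1 = 0 ∧
      energyProfile γ₁ γ₂ γ₃ D₁ D₂ D₃ P.2 = 0 ∧
      (∀ t : ℝ, 0 < t →
        (0 < energyProfile γ₁ γ₂ γ₃ D₁ D₂ D₃ t ↔ P.1 < t ∧ t < P.2))) := by
  have hcont : ContinuousOn (energyProfile γ₁ γ₂ γ₃ D₁ D₂ D₃) (Ici 0) :=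
    (continuous_energyProfile hγ₁.le (by linarith) (by linarith)).continuousOn
  have hderiv : ∀ t, 0 < t → HasDerivAt (energyProfile γ₁ γ₂ γ₃ D₁ D₂ D₃)
      (t * constSubRpow 1 (γ₁ * D₁) (γ₂ * D₂) (γ₃ * D₃) (γ₁ - 2) (γ₂ - 2) (γ₃ - 2) t) t :=
    fun t ht => hasDerivAt_energyProfile ht
  obtain ⟨R₀, R₁, hR⟩ := exists_posExactlyBetween_constSubRpow hD₁ hD₂ hD₃ (by linarith)
    (by linarith) (by linarith) ht₀
    (pos_of_mul_pos_right (energyProfile_eq_sq_mul ht₀ ▸ hpos) (sq_nonneg _))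
  have hf := hR.of_pos_mul (fun t ht => pow_pos ht 2) fun t ht => energyProfile_eq_sq_mul ht
  obtain ⟨t₁, ht₁, hψ₁⟩ := hf.exists_pos_of_hasDerivAt hcont hderiv
  obtain ⟨s, τ, hψ⟩ := exists_posExactlyBetween_constSubRpow (mul_pos hγ₁ hD₁)
    (mul_nonneg (by linarith) hD₂) (mul_pos (by linarith) hD₃) (by linarith) (by linarith)
    (by linarith) ht₁ hψ₁
  exact ⟨⟨s, τ, hψ.pos, hψ.lt, hψ.shape_of_hasDerivAt hcont
    (energyProfile_zero hγ₁.ne' (by linarith) (by linarith)) hderiv ht₀ hpos⟩, hf.existsUnique⟩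

end energyProfile

-- At `t = (4 c₁ A) ^ (2 - γ₁)⁻¹` the `γ₁`-term equals `t² / 4`, and the other two terms are
-- fixed multiples of the two summands bounded by `α`.
lemma exists_energyProfile_pos {γ₁ γ₂ γ₃ c₁ c₂ c₃ : ℝ} (hγ₁ : γ₁ < 2) (hc₁ : 0 < c₁)
    (hc₂ : 0 < c₂) (hc₃ : 0 < c₃) :
    ∃ α, 0 < α ∧ ∀ A B ν : ℝ, 0 < A → 0 ≤ B → 0 ≤ ν →
      B * A ^ ((γ₂ - 2) / (2 - γ₁)) + ν * A ^ ((γ₃ - 2) / (2 - γ₁)) < α →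
      ∃ t, 0 < t ∧ 0 < energyProfile γ₁ γ₂ γ₃ (c₁ * A) (c₂ * B) (c₃ * ν) t := by
  set K₂ := c₂ * (4 * c₁) ^ ((γ₂ - 2) / (2 - γ₁))
  set K₃ := c₃ * (4 * c₁) ^ ((γ₃ - 2) / (2 - γ₁))
  have hK₂ : 0 < K₂ := by positivity
  have hK₃ : 0 < K₃ := by positivity
  refine ⟨1 / (4 * (K₂ + K₃)), by positivity, fun A B ν hA hB hν hsmall => ?_⟩
  have hu : 0 < 4 * c₁ * A := by positivity
  have hγ : (2 - γ₁)⁻¹ * (γ₁ - 2) = -1 := by field_simp [(sub_pos.2 hγ₁).ne']; ring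
  set t := (4 * c₁ * A) ^ (2 - γ₁)⁻¹
  have ht : 0 < t := Real.rpow_pos_of_pos hu _
  have hpow : ∀ γ : ℝ, t ^ (γ - 2) = (4 * c₁) ^ ((γ - 2) / (2 - γ₁)) * A ^ ((γ - 2) / (2 - γ₁)) :=
    fun γ => by rw [← Real.rpow_mul hu.le, inv_mul_eq_div, Real.mul_rpow (by positivity) hA.le]
  have h₁ : c₁ * A * t ^ (γ₁ - 2) = 1 / 4 := by
    rw [← Real.rpow_mul hu.le, hγ, Real.rpow_neg_one]
    field_simp
  have hX : 0 ≤ B * A ^ ((γ₂ - 2) / (2 - γ₁)) := by positivity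
  have hY : 0 ≤ ν * A ^ ((γ₃ - 2) / (2 - γ₁)) := by positivity
  have hK :
      (K₂ + K₃) * (B * A ^ ((γ₂ - 2) / (2 - γ₁)) + ν * A ^ ((γ₃ - 2) / (2 - γ₁))) < 1 / 4 := by
    rw [lt_div_iff₀ (by positivity)] at hsmall
    linarith
  refine ⟨t, ht, ?_⟩
  rw [energyProfile_eq_sq_mul ht]
  refine mul_pos (pow_pos ht 2) ?_
  rw [constSubRpow, h₁, hpow γ₂, hpow γ₃]
  nlinarith

theorem stmt_0_general (N : ℕ) (hN : 3 ≤ N) (p q Cp Cq S : ℝ)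
    (hp : 2 < p) (hpN : p < 2 + 4 / (N : ℝ)) (hNq : 2 + 4 / (N : ℝ) < q)
    (hCp : 0 < Cp) (hCq : 0 < Cq) (hS : 0 < S) :
    ∃ α₁ : ℝ, 0 < α₁ ∧
      ∀ μ₁ μ₂ ν a b : ℝ, 0 < μ₁ → 0 < μ₂ → 0 < ν → 0 < a → 0 < b →
        Tab N p q μ₁ μ₂ ν a b < α₁ →
        -- exactly two critical points: a local minimum with negative value,
        -- and a global maximum over (0,∞) with positive value
        (∃ s τ : ℝ, 0 < s ∧ s < τ ∧
          (∀ t : ℝ, 0 < t →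
            (deriv (hab N p q Cp Cq S μ₁ μ₂ ν a b) t = 0 ↔ t = s ∨ t = τ)) ∧
          IsLocalMin (hab N p q Cp Cq S μ₁ μ₂ ν a b) s ∧
          hab N p q Cp Cq S μ₁ μ₂ ν a b s < 0 ∧
          (∀ t : ℝ, 0 < t →
            hab N p q Cp Cq S μ₁ μ₂ ν a b t ≤ hab N p q Cp Cq S μ₁ μ₂ ν a b τ) ∧
          0 < hab N p q Cp Cq S μ₁ μ₂ ν a b τ) ∧
        -- unique pair of zeros 0 < R₀ < R₁ with h > 0 exactly on (R₀, R₁)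
        (∃! P : ℝ × ℝ, 0 < P.1 ∧ P.1 < P.2 ∧
          hab N p q Cp Cq S μ₁ μ₂ ν a b P.1 = 0 ∧
          hab N p q Cp Cq S μ₁ μ₂ ν a b P.2 = 0 ∧
          (∀ t : ℝ, 0 < t →
            (0 < hab N p q Cp Cq S μ₁ μ₂ ν a b t ↔ P.1 < t ∧ t < P.2))) := by
  have hN' : (3 : ℝ) ≤ N := by exact_mod_cast hN
  have hN4 : (N : ℝ) * (4 / N) = 4 := mul_div_cancel₀ _ (by positivity)
  have hγp : 0 < gam N p := by unfold gam; nlinarith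
  have hγp₂ : gam N p < 2 := by unfold gam; nlinarith
  have hγq : 2 < gam N q := by unfold gam; nlinarith
  have h2s : 2 < twoStar N := by unfold twoStar; rw [lt_div_iff₀ (by linarith)]; linarith
  have hc₁ : 0 < Cp / p := div_pos hCp (by linarith)
  have hc₂ : 0 < Cq / q := div_pos hCq (by linarith [div_pos four_pos (by linarith : (0 : ℝ) < N)])
  have hc₃ : 0 < S ^ (-(twoStar N / 2)) := Real.rpow_pos_of_pos hS _
  obtain ⟨α₁, hα₁, hsmall⟩ :=
    exists_energyProfile_pos (γ₂ := gam N q) (γ₃ := twoStar N) hγp₂ hc₁ hc₂ hc₃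
  refine ⟨α₁, hα₁, fun μ₁ μ₂ ν a b hμ₁ hμ₂ hν ha hb hT => ?_⟩
  obtain ⟨t₀, ht₀, hpos⟩ := hsmall _ _ ν (by positivity) (by positivity) hν.le hT
  have hhab : hab N p q Cp Cq S μ₁ μ₂ ν a b = energyProfile (gam N p) (gam N q) (twoStar N)
      (Cp / p * (μ₁ * a ^ ((p - gam N p) / 2))) (Cq / q * (μ₂ * b ^ ((q - gam N q) / 2)))
      (S ^ (-(twoStar N / 2)) * ν) := by
    funext t
    simp only [hab, energyProfile]
    ring
  rw [hhab]
  exact energyProfile_shape hγp hγp₂ hγq.le h2s (by positivity) (by positivity) (by positivity)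
    ht₀ hpos

theorem stmt_0 (N : ℕ) (hN : 3 ≤ N) (p q Cp Cq S : ℝ)
    (hp : 2 < p) (hpN : p < 2 + 4 / (N : ℝ)) (hNq : 2 + 4 / (N : ℝ) < q)
    (hq : q < twoStar N) (hCp : 0 < Cp) (hCq : 0 < Cq) (hS : 0 < S) :
    ∃ α₁ : ℝ, 0 < α₁ ∧
      ∀ μ₁ μ₂ ν a b : ℝ, 0 < μ₁ → 0 < μ₂ → 0 < ν → 0 < a → 0 < b →
        Tab N p q μ₁ μ₂ ν a b < α₁ →
        -- exactly two critical points: a local minimum with negative value,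
        -- and a global maximum over (0,∞) with positive value
        (∃ s τ : ℝ, 0 < s ∧ s < τ ∧
          (∀ t : ℝ, 0 < t →
            (deriv (hab N p q Cp Cq S μ₁ μ₂ ν a b) t = 0 ↔ t = s ∨ t = τ)) ∧
          IsLocalMin (hab N p q Cp Cq S μ₁ μ₂ ν a b) s ∧
          hab N p q Cp Cq S μ₁ μ₂ ν a b s < 0 ∧
          (∀ t : ℝ, 0 < t →
            hab N p q Cp Cq S μ₁ μ₂ ν a b t ≤ hab N p q Cp Cq S μ₁ μ₂ ν a b τ) ∧
          0 < hab N p q Cp Cq S μ₁ μ₂ ν a b τ) ∧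
        -- unique pair of zeros 0 < R₀ < R₁ with h > 0 exactly on (R₀, R₁)
        (∃! P : ℝ × ℝ, 0 < P.1 ∧ P.1 < P.2 ∧
          hab N p q Cp Cq S μ₁ μ₂ ν a b P.1 = 0 ∧
          hab N p q Cp Cq S μ₁ μ₂ ν a b P.2 = 0 ∧
          (∀ t : ℝ, 0 < t →
            (0 < hab N p q Cp Cq S μ₁ μ₂ ν a b t ↔ P.1 < t ∧ t < P.2))) :=
  stmt_0_general N hN p q Cp Cq S hp hpN hNq hCp hCq hS
end

section
/- Suppose a, b > 0 are such that h_{a,b} has exactly two zeros 0 < R₀(a,b) < R₁(a,b) in (0,∞) and h_{a,b}(t) > 0 if and only if t ∈ (R₀(a,b), R₁(a,b)). Then R₀(a,b) < R₁(a,b) < (S^{2*/2}/(2ν))^{1/(2*−2)}. Moreover, R₀(a,b) → 0 and R₁(a,b) → (S^{2*/2}/(2ν))^{1/(2*−2)} as (a,b) → (0,0); precisely, for every ε > 0 there exists δ > 0 such that for all a, b ∈ (0, δ), h_{a,b} has exactly two zeros R₀(a,b) < R₁(a,b) with h_{a,b} > 0 exactly between them, R₀(a,b) < ε, and |R₁(a,b)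 − (S^{2*/2}/(2ν))^{1/(2*−2)}| < ε. -/
/-!
For `t > 0` one has `h_{a,b}(t) = t² G(log t)` with
`G(x) = 1/2 - D₁ e^{(γ_p-2)x} - D₂ e^{(γ_q-2)x} - ν S^{-2*/2} e^{(2*-2)x}`, a strictly concave
function of `x` as soon as `D₁ > 0`. Hence `h_{a,b}` cannot be `≥ 0` at two points without being
`> 0` strictly between them, which forces the sign pattern of `TwoZeros` around any two zeros.

Dropping the positive terms, `h_{a,b} < h_{0,0}`, and `h_{0,0}(t) = t² (1/2 - ν S^{-2*/2} t^{2*-2})`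
is positive exactly below `R = (S^{2*/2}/(2ν))^{1/(2*-2)}`; this bounds `R₁`. As `(a,b) → (0,0)`,
`h_{a,b} → h_{0,0}` pointwise, so `h_{a,b}` is positive at two fixed points close to `0` and to
`R`, while it is negative near `0` (there `t^{γ_p}` with `γ_p < 2` dominates) and at `R`; the
intermediate value theorem then puts `R₀` and `R₁` next to `0` and `R`.
-/

open Real

/-- `h` has exactly two zeros `0 < R₀ < R₁` in `(0,∞)`,
and `h t > 0` iff `t ∈ (R₀, R₁)`. -/
def TwoZeros (h : ℝ → ℝ) (R₀ R₁ : ℝ) : Prop :=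
  0 < R₀ ∧ R₀ < R₁ ∧
    (∀ t : ℝ, 0 < t → (h t = 0 ↔ t = R₀ ∨ t = R₁)) ∧
    (∀ t : ℝ, 0 < t → (0 < h t ↔ R₀ < t ∧ t < R₁))

open Set Filter Topology

theorem twoZeros_of_pos_of_nonneg {f : ℝ → ℝ}
    (hf : ∀ s t u, 0 < s → s < t → t < u → 0 ≤ f s → 0 ≤ f u → 0 < f t)
    {R₀ R₁ : ℝ} (hR₀ : 0 < R₀) (hR : R₀ < R₁) (hf₀ : f R₀ = 0) (hf₁ : f R₁ = 0) :
    TwoZeros f R₀ R₁ := by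
  have below : ∀ t, 0 < t → t < R₀ → f t < 0 := fun t ht htR => by
    by_contra! h
    exact (hf t R₀ R₁ ht htR hR h hf₁.ge).ne' hf₀
  have above : ∀ t, R₁ < t → f t < 0 := fun t htR => by
    by_contra! h
    exact (hf R₀ R₁ t hR₀ hR htR hf₀.ge h).ne' hf₁
  have between : ∀ t, R₀ < t → t < R₁ → 0 < f t := fun t h₀ h₁ =>
    hf R₀ t R₁ hR₀ h₀ h₁ hf₀.ge hf₁.ge
  refine ⟨hR₀, hR, fun t ht => ⟨fun h => ?_, ?_⟩, fun t ht => ⟨fun h => ?_, fun h => ?_⟩⟩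
  · by_contra! hne
    rcases lt_or_gt_of_ne hne.1 with h₀ | h₀
    · exact (below t ht h₀).ne h
    rcases lt_or_gt_of_ne hne.2 with h₁ | h₁
    · exact (between t h₀ h₁).ne' h
    · exact (above t h₁).ne h
  · rintro (rfl | rfl) <;> assumption
  · have hne₀ : t ≠ R₀ := by rintro rfl; exact h.ne' hf₀
    have hne₁ : t ≠ R₁ := by rintro rfl; exact h.ne' hf₁
    exact ⟨(lt_or_gt_of_ne hne₀).resolve_left fun h₀ => (below t ht h₀).not_gt h,
      (lt_or_gt_of_ne hne₁).resolve_right fun h₁ => (above t h₁).not_gt h⟩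
  · exact between t h.1 h.2

noncomputable def reducedProfile (A B C α β γ x : ℝ) : ℝ :=
  1 / 2 - A * exp (α * x) - B * exp (β * x) - C * exp (γ * x)

section ReducedProfile

variable {A B C α β γ : ℝ}

theorem strictConcaveOn_reducedProfile (hA : 0 < A) (hα : α ≠ 0) (hB : 0 ≤ B) (hC : 0 ≤ C) :
    StrictConcaveOn ℝ univ (reducedProfile A B C α β γ) := by
  refine ⟨convex_univ, fun x _ y _ hxy a b ha hb hab => ?_⟩
  have convex (κ : ℝ) : exp (κ * (a * x + b * y)) ≤ a * exp (κ * x) + b * exp (κ * y) := by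
    simpa only [smul_eq_mul, mul_add, mul_left_comm κ] using
      convexOn_exp.2 (mem_univ (κ * x)) (mem_univ (κ * y)) ha.le hb.le hab
  have strict : exp (α * (a * x + b * y)) < a * exp (α * x) + b * exp (α * y) := by
    simpa only [smul_eq_mul, mul_add, mul_left_comm α] using
      strictConvexOn_exp.2 (mem_univ (α * x)) (mem_univ (α * y))
        (mul_right_injective₀ hα |>.ne hxy) ha hb hab
  simp only [reducedProfile, smul_eq_mul]
  linarith [mul_lt_mul_of_pos_left strict hA, mul_le_mul_of_nonneg_left (convex β) hB,
    mul_le_mul_of_nonneg_left (convex γ) hC]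

theorem eventually_reducedProfile_neg (hA : 0 < A) (hα : α < 0) (hB : 0 ≤ B) (hC : 0 ≤ C) :
    ∀ᶠ x in atBot, reducedProfile A B C α β γ x < 0 := by
  have hexp : Tendsto (fun x => A * exp (α * x)) atBot atTop :=
    (tendsto_exp_atTop.comp (tendsto_id.const_mul_atBot_of_neg hα)).const_mul_atTop hA
  filter_upwards [hexp.eventually_gt_atTop (1 / 2)] with x hx
  have := mul_nonneg hB (exp_pos (β * x)).le
  have := mul_nonneg hC (exp_pos (γ * x)).le
  simp only [reducedProfile]
  linarith

end ReducedProfile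

section Exponents

variable {N : ℕ} {s : ℝ}

theorem twoStar_sub_two (hN : 2 < N) : twoStar N - 2 = 4 / ((N : ℝ) - 2) := by
  have : (N : ℝ) - 2 ≠ 0 := sub_ne_zero.2 (by exact_mod_cast hN.ne')
  rw [twoStar]
  field_simp
  ring

theorem two_lt_twoStar (hN : 2 < N) : 2 < twoStar N := by
  have : (2 : ℝ) < N := by exact_mod_cast hN
  linarith [twoStar_sub_two hN, div_pos four_pos (sub_pos.2 this)]

theorem two_add_four_div_lt_twoStar (hN : 2 < N) : 2 + 4 / (N : ℝ) < twoStar N := by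
  have : (2 : ℝ) < N := by exact_mod_cast hN
  have : 4 / (N : ℝ) < 4 / ((N : ℝ) - 2) :=
    div_lt_div_of_pos_left four_pos (by linarith) (by linarith)
  linarith [twoStar_sub_two hN]

theorem gam_lt_two (hN : 0 < N) (hs : s < 2 + 4 / (N : ℝ)) : gam N s < 2 := by
  have hN' : (0 : ℝ) < N := by exact_mod_cast hN
  have : (N : ℝ) * (s - 2) < N * (4 / N) := mul_lt_mul_of_pos_left (by linarith) hN'
  rw [mul_div_cancel₀ _ hN'.ne'] at this
  rw [gam]
  linarith

theorem gam_lt_self (hN : 2 < N) (hs : s < twoStar N) : gam N s < s := by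
  have hN' : (2 : ℝ) < N := by exact_mod_cast hN
  have : s * ((N : ℝ) - 2) < 2 * N := by
    rwa [twoStar, lt_div_iff₀ (by linarith)] at hs
  rw [gam]
  linarith

end Exponents

noncomputable def limitRadius (N : ℕ) (S ν : ℝ) : ℝ :=
  (S ^ (twoStar N / 2) / (2 * ν)) ^ (1 / (twoStar N - 2))

section Hab

variable {N : ℕ} {p q Cp Cq S μ₁ μ₂ ν a b t : ℝ}

theorem limitRadius_pos (hS : 0 < S) (hν : 0 < ν) : 0 < limitRadius N S ν := by
  unfold limitRadius
  positivity

theorem mul_limitRadius_rpow (hS : 0 < S) (hν : 0 < ν) (hN : twoStar N ≠ 2) :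
    ν * S ^ (-(twoStar N / 2)) * limitRadius N S ν ^ (twoStar N - 2) = 1 / 2 := by
  rw [limitRadius, ← rpow_mul (by positivity), one_div_mul_cancel (sub_ne_zero.2 hN), rpow_one,
    rpow_neg hS.le]
  field_simp

theorem hab_eq_sq_mul_reducedProfile (ht : 0 < t) :
    hab N p q Cp Cq S μ₁ μ₂ ν a b t = t ^ 2 * reducedProfile (μ₁ / p * Cp * a ^ ((p - gam N p) / 2))
      (μ₂ / q * Cq * b ^ ((q - gam N q) / 2)) (ν * S ^ (-(twoStar N / 2)))
      (gam N p - 2) (gam N q - 2) (twoStar N - 2) (log t) := by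
  have split (e : ℝ) : t ^ e = t ^ 2 * exp ((e - 2) * log t) := by
    rw [mul_comm (e - 2), ← rpow_def_of_pos ht, ← rpow_natCast, ← rpow_add ht]
    norm_num
  rw [hab, reducedProfile, split (gam N p), split (gam N q), split (twoStar N)]
  ring

theorem continuousOn_hab : ContinuousOn (hab N p q Cp Cq S μ₁ μ₂ ν a b) (Ioi 0) := by
  intro t ht
  unfold hab
  fun_prop (disch := exact Or.inl (ne_of_gt ht))

theorem hab_pos_of_nonneg_of_nonneg (hp : 0 < p) (hCp : 0 < Cp) (hμ₁ : 0 < μ₁) (ha : 0 < a)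
    (hγp : gam N p ≠ 2) (hq : 0 < q) (hCq : 0 < Cq) (hμ₂ : 0 < μ₂) (hb : 0 < b) (hS : 0 < S)
    (hν : 0 < ν) {s u : ℝ} (hs : 0 < s) (hst : s < t) (htu : t < u)
    (hs₀ : 0 ≤ hab N p q Cp Cq S μ₁ μ₂ ν a b s) (hu₀ : 0 ≤ hab N p q Cp Cq S μ₁ μ₂ ν a b u) :
    0 < hab N p q Cp Cq S μ₁ μ₂ ν a b t := by
  have ht := hs.trans hst
  have hu := ht.trans htu
  rw [hab_eq_sq_mul_reducedProfile hs, mul_nonneg_iff_of_pos_left (by positivity)] at hs₀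
  rw [hab_eq_sq_mul_reducedProfile hu, mul_nonneg_iff_of_pos_left (by positivity)] at hu₀
  rw [hab_eq_sq_mul_reducedProfile ht, mul_pos_iff_of_pos_left (by positivity)]
  have hsu := log_lt_log hs (hst.trans htu)
  have hlog : log t ∈ openSegment ℝ (log s) (log u) := by
    rw [openSegment_eq_Ioo hsu]
    exact ⟨log_lt_log hs hst, log_lt_log ht htu⟩
  refine (le_min hs₀ hu₀).trans_lt ((strictConcaveOn_reducedProfile ?_ (sub_ne_zero.2 hγp) ?_ ?_
    ).lt_on_openSegment (mem_univ _) (mem_univ _) hsu.ne hlog) <;> positivity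

theorem hab_zero_zero (hpγ : gam N p < p) (hqγ : gam N q < q) :
    hab N p q Cp Cq S μ₁ μ₂ ν 0 0 t = t ^ 2 / 2 - ν * S ^ (-(twoStar N / 2)) * t ^ twoStar N := by
  rw [hab, zero_rpow (by linarith), zero_rpow (by linarith)]
  ring

theorem hab_zero_zero_pos_iff (hN : 2 < N) (hpγ : gam N p < p) (hqγ : gam N q < q) (hS : 0 < S)
    (hν : 0 < ν) (ht : 0 < t) :
    0 < hab N p q Cp Cq S μ₁ μ₂ ν 0 0 t ↔ t < limitRadius N S ν := by
  have hγ := two_lt_twoStar hN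
  have split : t ^ twoStar N = t ^ 2 * t ^ (twoStar N - 2) := by
    rw [← rpow_natCast, ← rpow_add ht]
    norm_num
  rw [hab_zero_zero hpγ hqγ, split, show ∀ c : ℝ, t ^ 2 / 2 - c * (t ^ 2 * t ^ (twoStar N - 2)) =
      t ^ 2 * (1 / 2 - c * t ^ (twoStar N - 2)) from fun c => by ring,
    mul_pos_iff_of_pos_left (by positivity), sub_pos, ← mul_limitRadius_rpow hS hν hγ.ne',
    mul_lt_mul_iff_of_pos_left (by positivity),
    rpow_lt_rpow_iff ht.le (limitRadius_pos hS hν).le (sub_pos.2 hγ)]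

theorem hab_lt_hab_zero_zero (hp : 0 < p) (hCp : 0 < Cp) (hμ₁ : 0 < μ₁) (ha : 0 < a)
    (hpγ : gam N p < p) (hq : 0 < q) (hCq : 0 < Cq) (hμ₂ : 0 < μ₂) (hb : 0 < b)
    (hqγ : gam N q < q) (ht : 0 < t) :
    hab N p q Cp Cq S μ₁ μ₂ ν a b t < hab N p q Cp Cq S μ₁ μ₂ ν 0 0 t := by
  have : 0 < μ₁ / p * Cp * a ^ ((p - gam N p) / 2) * t ^ gam N p := by positivity
  have : 0 < μ₂ / q * Cq * b ^ ((q - gam N q) / 2) * t ^ gam N q := by positivity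
  rw [hab_zero_zero hpγ hqγ, hab]
  linarith

theorem hab_neg_of_limitRadius_le (hN : 2 < N) (hp : 0 < p) (hCp : 0 < Cp) (hμ₁ : 0 < μ₁)
    (ha : 0 < a) (hpγ : gam N p < p) (hq : 0 < q) (hCq : 0 < Cq) (hμ₂ : 0 < μ₂) (hb : 0 < b)
    (hqγ : gam N q < q) (hS : 0 < S) (hν : 0 < ν) (ht : limitRadius N S ν ≤ t) :
    hab N p q Cp Cq S μ₁ μ₂ ν a b t < 0 := by
  have ht₀ := (limitRadius_pos hS hν).trans_le ht
  exact (hab_lt_hab_zero_zero hp hCp hμ₁ ha hpγ hq hCq hμ₂ hb hqγ ht₀).trans_le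
    (not_lt.1 fun h => ht.not_gt ((hab_zero_zero_pos_iff hN hpγ hqγ hS hν ht₀).1 h))

theorem lt_limitRadius_of_twoZeros (hN : 2 < N) (hp : 0 < p) (hCp : 0 < Cp) (hμ₁ : 0 < μ₁)
    (ha : 0 < a) (hpγ : gam N p < p) (hq : 0 < q) (hCq : 0 < Cq) (hμ₂ : 0 < μ₂) (hb : 0 < b)
    (hqγ : gam N q < q) (hS : 0 < S) (hν : 0 < ν) {R₀ R₁ : ℝ}
    (hR : TwoZeros (hab N p q Cp Cq S μ₁ μ₂ ν a b) R₀ R₁) : R₁ < limitRadius N S ν :=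
  not_le.1 fun h => (hab_neg_of_limitRadius_le hN hp hCp hμ₁ ha hpγ hq hCq hμ₂ hb hqγ hS hν h).ne
    ((hR.2.2.1 R₁ (hR.1.trans hR.2.1)).2 (Or.inr rfl))

theorem eventually_hab_pos (hN : 2 < N) (hpγ : gam N p < p) (hqγ : gam N q < q) (hS : 0 < S)
    (hν : 0 < ν) (ht : 0 < t) (htT : t < limitRadius N S ν) :
    ∀ᶠ ab : ℝ × ℝ in 𝓝 (0, 0), 0 < hab N p q Cp Cq S μ₁ μ₂ ν ab.1 ab.2 t := by
  have hcont : ContinuousAt (fun ab : ℝ × ℝ => hab N p q Cp Cq S μ₁ μ₂ ν ab.1 ab.2 t) (0, 0) := by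
    unfold hab
    fun_prop (disch := first | exact Or.inr (by linarith) | exact Or.inl ht.ne')
  exact hcont.eventually (lt_mem_nhds ((hab_zero_zero_pos_iff hN hpγ hqγ hS hν ht).2 htT))

theorem exists_hab_neg_lt (hp : 0 < p) (hCp : 0 < Cp) (hμ₁ : 0 < μ₁) (ha : 0 < a)
    (hγp : gam N p < 2) (hq : 0 < q) (hCq : 0 < Cq) (hμ₂ : 0 < μ₂) (hb : 0 < b) (hS : 0 < S)
    (hν : 0 < ν) {t₀ : ℝ} (ht₀ : 0 < t₀) :
    ∃ s ∈ Ioo 0 t₀, hab N p q Cp Cq S μ₁ μ₂ ν a b s < 0 := by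
  obtain ⟨x, hx, hxt₀⟩ := ((eventually_reducedProfile_neg
    (A := μ₁ / p * Cp * a ^ ((p - gam N p) / 2)) (B := μ₂ / q * Cq * b ^ ((q - gam N q) / 2))
    (C := ν * S ^ (-(twoStar N / 2))) (α := gam N p - 2) (β := gam N q - 2) (γ := twoStar N - 2)
    (by positivity) (by linarith) (by positivity) (by positivity)).and
    (eventually_lt_atBot (log t₀))).exists
  refine ⟨exp x, ⟨exp_pos x, (lt_log_iff_exp_lt ht₀).1 hxt₀⟩, ?_⟩
  rw [hab_eq_sq_mul_reducedProfile (exp_pos x), log_exp]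
  exact mul_neg_of_pos_of_neg (by positivity) hx

theorem exists_twoZeros_of_pos (hN : 2 < N) (hp : 0 < p) (hCp : 0 < Cp) (hμ₁ : 0 < μ₁)
    (ha : 0 < a) (hγp : gam N p < 2) (hpγ : gam N p < p) (hq : 0 < q) (hCq : 0 < Cq)
    (hμ₂ : 0 < μ₂) (hb : 0 < b) (hqγ : gam N q < q) (hS : 0 < S) (hν : 0 < ν) {t₀ t₁ : ℝ}
    (ht₀ : 0 < t₀) (ht₀₁ : t₀ ≤ t₁) (h₀ : 0 < hab N p q Cp Cq S μ₁ μ₂ ν a b t₀)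
    (h₁ : 0 < hab N p q Cp Cq S μ₁ μ₂ ν a b t₁) :
    ∃ R₀ R₁, TwoZeros (hab N p q Cp Cq S μ₁ μ₂ ν a b) R₀ R₁ ∧ R₀ < t₀ ∧ t₁ < R₁ := by
  have hneg {t : ℝ} (ht : limitRadius N S ν ≤ t) : hab N p q Cp Cq S μ₁ μ₂ ν a b t < 0 :=
    hab_neg_of_limitRadius_le hN hp hCp hμ₁ ha hpγ hq hCq hμ₂ hb hqγ hS hν ht
  have ht₁T : t₁ < limitRadius N S ν := not_le.1 fun h => (hneg h).not_gt h₁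
  obtain ⟨s, ⟨hs, hst₀⟩, hs₀⟩ := exists_hab_neg_lt hp hCp hμ₁ ha hγp hq hCq hμ₂ hb hS hν ht₀
  have hcont := continuousOn_hab (N := N) (p := p) (q := q) (Cp := Cp) (Cq := Cq) (S := S)
    (μ₁ := μ₁) (μ₂ := μ₂) (ν := ν) (a := a) (b := b)
  obtain ⟨R₀, ⟨hsR₀, hR₀t₀⟩, hR₀⟩ := intermediate_value_Ioo hst₀.le
    (hcont.mono fun x hx => hs.trans_le hx.1) ⟨hs₀, h₀⟩
  obtain ⟨R₁, ⟨ht₁R₁, -⟩, hR₁⟩ := intermediate_value_Ioo' ht₁T.le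
    (hcont.mono fun x hx => (ht₀.trans_le ht₀₁).trans_le hx.1) ⟨hneg le_rfl, h₁⟩
  refine ⟨R₀, R₁, twoZeros_of_pos_of_nonneg (fun s t u hs hst htu => ?_) (hs.trans hsR₀)
    (by linarith) hR₀ hR₁, hR₀t₀, ht₁R₁⟩
  exact hab_pos_of_nonneg_of_nonneg hp hCp hμ₁ ha hγp.ne hq hCq hμ₂ hb hS hν hs hst htu

end Hab

theorem stmt_1 (N : ℕ) (hN : 3 ≤ N) (p q Cp Cq S μ₁ μ₂ ν : ℝ)
    (hp : 2 < p) (hpN : p < 2 + 4 / (N : ℝ)) (hNq : 2 + 4 / (N : ℝ) < q)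
    (hq : q < twoStar N) (hCp : 0 < Cp) (hCq : 0 < Cq) (hS : 0 < S)
    (hμ₁ : 0 < μ₁) (hμ₂ : 0 < μ₂) (hν : 0 < ν) :
    -- the upper bound R₀ < R₁ < (S^{2*/2}/(2ν))^{1/(2*-2)} for all a, b > 0
    (∀ a b R₀ R₁ : ℝ, 0 < a → 0 < b →
      TwoZeros (hab N p q Cp Cq S μ₁ μ₂ ν a b) R₀ R₁ →
      R₀ < R₁ ∧ R₁ < (S ^ (twoStar N / 2) / (2 * ν)) ^ (1 / (twoStar N - 2))) ∧
    -- the limiting behaviour as (a,b) → (0,0)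
    (∀ ε : ℝ, 0 < ε → ∃ δ : ℝ, 0 < δ ∧
      ∀ a b : ℝ, 0 < a → a < δ → 0 < b → b < δ →
        ∃ R₀ R₁ : ℝ, TwoZeros (hab N p q Cp Cq S μ₁ μ₂ ν a b) R₀ R₁ ∧
          R₀ < ε ∧
          |R₁ - (S ^ (twoStar N / 2) / (2 * ν)) ^ (1 / (twoStar N - 2))| < ε) := by
  have hγp := gam_lt_two (by omega) hpN
  have hpγ := gam_lt_self hN (hpN.trans (two_add_four_div_lt_twoStar hN))
  have hqγ := gam_lt_self hN hq
  have hq₀ : 0 < q := by linarith [div_pos four_pos (by positivity : (0 : ℝ) < N)]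
  have hR₁_lt {a b R₀ R₁ : ℝ} (ha : 0 < a) (hb : 0 < b) :=
    lt_limitRadius_of_twoZeros (R₀ := R₀) (R₁ := R₁) hN (by linarith) hCp hμ₁ ha hpγ hq₀ hCq hμ₂
      hb hqγ hS hν
  rw [← limitRadius.eq_1]
  refine ⟨fun a b R₀ R₁ ha hb hR => ⟨hR.2.1, hR₁_lt ha hb hR⟩, fun ε hε => ?_⟩
  have hT := limitRadius_pos (N := N) hS hν
  set T := limitRadius N S ν
  set t₀ := min ε T / 2 with ht₀def
  have ht₀ : 0 < t₀ := by positivity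
  have ht₀ε : t₀ < ε := by linarith [min_le_left ε T, ht₀def]
  have ht₀T : t₀ ≤ T / 2 := by linarith [min_le_right ε T, ht₀def]
  obtain ⟨δ, hδ, hpos⟩ := Metric.eventually_nhds_iff.1
    ((eventually_hab_pos hN hpγ hqγ hS hν ht₀ (by linarith)).and
      (eventually_hab_pos hN hpγ hqγ hS hν (t := T - t₀) (by linarith) (by linarith)))
  refine ⟨δ, hδ, fun a b ha haδ hb hbδ => ?_⟩
  obtain ⟨h₀, h₁⟩ := hpos (y := (a, b))
    (by simp [Prod.dist_eq, abs_of_pos ha, abs_of_pos hb, haδ, hbδ])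
  obtain ⟨R₀, R₁, hR, hR₀, hR₁⟩ := exists_twoZeros_of_pos hN (by linarith) hCp hμ₁ ha hγp hpγ
    hq₀ hCq hμ₂ hb hqγ hS hν ht₀ (by linarith) h₀ h₁
  exact ⟨R₀, R₁, hR, by linarith, abs_lt.2 ⟨by linarith, by linarith [hR₁_lt ha hb hR]⟩⟩
end

section
/- Suppose 0 < a₁ ≤ a and 0 < b₁ ≤ b are such that both h_{a,b} and h_{a₁,b₁} have exactly two zeros in (0,∞), denoted R₀(a,b) < R₁(a,b) and R₀(a₁,b₁) < R₁(a₁,b₁) respectively, with each function positive exactly between its two zeros. Then R₀(a₁,b₁) ≤ R₀(a,b) and R₁(a₁,b₁) ≥ R₁(a,b); that is, the smaller zero R₀ is nondecreasing in each of the variables a and b, and the larger zero R₁ is nonincreasing in each of a and b. -/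
open Real

theorem stmt_2 (N : ℕ) (hN : 3 ≤ N) (p q Cp Cq S μ₁ μ₂ ν : ℝ)
    (hp : 2 < p) (hpN : p < 2 + 4 / (N : ℝ)) (hNq : 2 + 4 / (N : ℝ) < q)
    (hq : q < twoStar N) (hCp : 0 < Cp) (hCq : 0 < Cq) (hS : 0 < S)
    (hμ₁ : 0 < μ₁) (hμ₂ : 0 < μ₂) (hν : 0 < ν)
    (a b a₁ b₁ R₀ R₁ R₀' R₁' : ℝ)
    (ha₁ : 0 < a₁) (ha : a₁ ≤ a) (hb₁ : 0 < b₁) (hb : b₁ ≤ b)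
    (H : TwoZeros (hab N p q Cp Cq S μ₁ μ₂ ν a b) R₀ R₁)
    (H₁ : TwoZeros (hab N p q Cp Cq S μ₁ μ₂ ν a₁ b₁) R₀' R₁') :
    R₀' ≤ R₀ ∧ R₁ ≤ R₁' := by
  have hN3 : (3 : ℝ) ≤ (N : ℝ) := by exact_mod_cast hN
  have hNpos : (0 : ℝ) < (N : ℝ) := by linarith
  have hN2 : (0 : ℝ) < (N : ℝ) - 2 := by linarith
  -- p < 2* and q < 2*
  have h2N : 2 + 4 / (N : ℝ) < twoStar N := by
    rw [twoStar, lt_div_iff₀ hN2]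
    have h4 : 4 / (N : ℝ) * (N : ℝ) = 4 := div_mul_cancel₀ _ hNpos.ne'
    have h4p : 0 < 4 / (N : ℝ) := by positivity
    nlinarith
  have hpstar : p < twoStar N := by linarith
  -- exponents nonneg
  have hep : 0 ≤ (p - gam N p) / 2 := by
    have : (N : ℝ) * (p - 2) / 2 ≤ p := by
      rw [twoStar, lt_div_iff₀ hN2] at hpstar
      nlinarith
    simp [gam]; linarith
  have heq : 0 ≤ (q - gam N q) / 2 := by
    have hqstar := hq
    rw [twoStar, lt_div_iff₀ hN2] at hqstar
    have : (N : ℝ) * (q - 2) / 2 ≤ q := by nlinarith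
    simp [gam]; linarith
  -- pointwise comparison
  have key : ∀ t : ℝ, 0 < t →
      hab N p q Cp Cq S μ₁ μ₂ ν a b t ≤ hab N p q Cp Cq S μ₁ μ₂ ν a₁ b₁ t := by
    intro t ht
    have h1 : a₁ ^ ((p - gam N p) / 2) ≤ a ^ ((p - gam N p) / 2) :=
      Real.rpow_le_rpow ha₁.le ha hep
    have h2 : b₁ ^ ((q - gam N q) / 2) ≤ b ^ ((q - gam N q) / 2) :=
      Real.rpow_le_rpow hb₁.le hb heq
    have ht1 : 0 ≤ t ^ (gam N p) := Real.rpow_nonneg ht.le _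
    have ht2 : 0 ≤ t ^ (gam N q) := Real.rpow_nonneg ht.le _
    have hp0 : 0 < p := by linarith
    have hq0 : 0 < q := by linarith
    have hc1 : 0 ≤ μ₁ / p * Cp := (mul_pos (div_pos hμ₁ hp0) hCp).le
    have hc2 : 0 ≤ μ₂ / q * Cq := (mul_pos (div_pos hμ₂ hq0) hCq).le
    unfold hab
    have m1 : μ₁ / p * Cp * a₁ ^ ((p - gam N p) / 2) * t ^ (gam N p)
        ≤ μ₁ / p * Cp * a ^ ((p - gam N p) / 2) * t ^ (gam N p) := by
      apply mul_le_mul_of_nonneg_right _ ht1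
      exact mul_le_mul_of_nonneg_left h1 hc1
    have m2 : μ₂ / q * Cq * b₁ ^ ((q - gam N q) / 2) * t ^ (gam N q)
        ≤ μ₂ / q * Cq * b ^ ((q - gam N q) / 2) * t ^ (gam N q) := by
      apply mul_le_mul_of_nonneg_right _ ht2
      exact mul_le_mul_of_nonneg_left h2 hc2
    linarith
  obtain ⟨hR₀, hR01, hz, hpos⟩ := H
  obtain ⟨hR₀', hR01', hz', hpos'⟩ := H₁
  have hR₁ : 0 < R₁ := hR₀.trans hR01
  constructor
  · -- h₁(R₀) ≥ h(R₀) = 0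
    have h0 : hab N p q Cp Cq S μ₁ μ₂ ν a b R₀ = 0 := (hz R₀ hR₀).mpr (Or.inl rfl)
    have hge : 0 ≤ hab N p q Cp Cq S μ₁ μ₂ ν a₁ b₁ R₀ := by
      have := key R₀ hR₀; linarith
    rcases hge.lt_or_eq with hlt | heqz
    · exact ((hpos' R₀ hR₀).mp hlt).1.le
    · rcases (hz' R₀ hR₀).mp heqz.symm with h | h
      · exact h.symm.le
      · exact le_of_lt (h ▸ hR01')
  · -- h₁(R₁) ≥ h(R₁) = 0
    have h0 : hab N p q Cp Cq S μ₁ μ₂ ν a b R₁ = 0 := (hz R₁ hR₁).mpr (Or.inr rfl)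
    have hge : 0 ≤ hab N p q Cp Cq S μ₁ μ₂ ν a₁ b₁ R₁ := by
      have := key R₁ hR₁; linarith
    rcases hge.lt_or_eq with hlt | heqz
    · exact ((hpos' R₁ hR₁).mp hlt).2.le
    · rcases (hz' R₁ hR₁).mp heqz.symm with h | h
      · exact le_of_lt (h ▸ hR01')
      · exact h.le
end

section
/- Let N ≥ 3, 2 < p < 2 + 4/N < q ≤ 2*, 2 < r < 2*, and let a, b, c, d > 0. Then the function l(t) = a t² − b t^{γ_r} − c t^{γ_p} − d t^{γ_q}, defined for t ∈ (0,∞), has at most two critical points; that is, the set {t > 0 : l'(t) = 0} has at most two elements. -/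
/-!
Write `l(t) = a t² - ∑ kᵢ t^γᵢ` with `kᵢ γᵢ ≥ 0`. For `t > 0` one has `l'(t) = t g(t)` with
`g(t) = 2a - ∑ kᵢ γᵢ t^(γᵢ-2)`, and `t g'(t) = ∑ kᵢ γᵢ (2 - γᵢ) t^(γᵢ-2)`. Each summand of the
latter is a multiple `c t^e` with `c e = -kᵢ γᵢ (γᵢ - 2)² ≤ 0`, hence nonincreasing, and strictly
decreasing as soon as some `kᵢ γᵢ > 0` with `γᵢ ≠ 2`; in the theorem this is the term with
`γ_q > 2`.
So `g'` vanishes at most once on `(0, ∞)`, and by Rolle `g`, hence `l'`, vanishes at most twice.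
-/

open Real

open Set

theorem encard_zeros_le_encard_deriv_zeros_add_one {s : Set ℝ} (hs : s.OrdConnected)
    {f f' : ℝ → ℝ} (hf : ∀ x ∈ s, HasDerivAt f (f' x) x) :
    {x ∈ s | f x = 0}.encard ≤ {x ∈ s | f' x = 0}.encard + 1 := by
  obtain hZ' | hZ' := {x ∈ s | f' x = 0}.finite_or_infinite
  swap
  · simp [hZ'.encard_eq]
  have card_le : ∀ u : Finset ℝ, ↑u ⊆ {x ∈ s | f x = 0} → u.card ≤ hZ'.toFinset.card + 1 := by
    intro u hu
    refine Finset.card_le_of_interleaved fun x hx y hy hxy _ => ?_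
    obtain ⟨hxs, hfx⟩ := hu hx
    obtain ⟨hys, hfy⟩ := hu hy
    have hIcc : Icc x y ⊆ s := hs.out hxs hys
    obtain ⟨z, hz, hf'z⟩ := exists_hasDerivAt_eq_zero hxy
      (HasDerivAt.continuousOn fun w hw => hf w (hIcc hw)) (hfx.trans hfy.symm)
      fun w hw => hf w (hIcc (Ioo_subset_Icc_self hw))
    exact ⟨z, hZ'.mem_toFinset.2 ⟨hIcc (Ioo_subset_Icc_self hz), hf'z⟩, hz⟩
  rw [hZ'.encard_eq_coe_toFinset_card]
  obtain hZ | hZ := {x ∈ s | f x = 0}.finite_or_infinite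
  · rw [hZ.encard_eq_coe_toFinset_card]
    exact_mod_cast card_le _ (by simp)
  · obtain ⟨u, hu, hcard⟩ := hZ.exists_subset_card_eq (hZ'.toFinset.card + 2)
    have := card_le u hu
    omega

theorem antitoneOn_const_mul_rpow {c e : ℝ} (hce : c * e ≤ 0) :
    AntitoneOn (fun t : ℝ => c * t ^ e) (Ioi 0) := by
  intro x hx y _ hxy
  rcases mul_nonpos_iff.1 hce with ⟨hc, he⟩ | ⟨hc, he⟩
  · exact mul_le_mul_of_nonneg_left (rpow_le_rpow_of_nonpos hx hxy he) hc
  · exact mul_le_mul_of_nonpos_left (rpow_le_rpow (le_of_lt hx) hxy he) hc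

theorem strictAntiOn_const_mul_rpow {c e : ℝ} (hce : c * e < 0) :
    StrictAntiOn (fun t : ℝ => c * t ^ e) (Ioi 0) := by
  intro x hx y _ hxy
  rcases mul_neg_iff.1 hce with ⟨hc, he⟩ | ⟨hc, he⟩
  · exact mul_lt_mul_of_pos_left (rpow_lt_rpow_of_neg hx hxy he) hc
  · exact mul_lt_mul_of_neg_left (rpow_lt_rpow (le_of_lt hx) hxy he) hc

namespace PowerCombination

variable {ι : Type*} (s : Finset ι) (a : ℝ) (k γ : ι → ℝ)

noncomputable def reducedDeriv (t : ℝ) : ℝ :=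
  2 * a - ∑ i ∈ s, k i * γ i * t ^ (γ i - 2)

noncomputable def scaledDerivReducedDeriv (t : ℝ) : ℝ :=
  ∑ i ∈ s, k i * γ i * (2 - γ i) * t ^ (γ i - 2)

variable {s a k γ}

theorem hasDerivAt_sub_sum {t : ℝ} (ht : 0 < t) :
    HasDerivAt (fun t => a * t ^ 2 - ∑ i ∈ s, k i * t ^ γ i) (t * reducedDeriv s a k γ t) t := by
  have hsq : HasDerivAt (fun t : ℝ => a * t ^ 2) (a * (2 * t)) t := by
    simpa using (hasDerivAt_pow 2 t).const_mul a
  have hsum := HasDerivAt.fun_sum fun i (_ : i ∈ s) =>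
    (hasDerivAt_rpow_const (p := γ i) (Or.inl ht.ne')).const_mul (k i)
  refine (hsq.sub hsum).congr_deriv ?_
  have hpow : ∀ i, t ^ (γ i - 1) = t * t ^ (γ i - 2) := fun i => by
    rw [show γ i - 1 = γ i - 2 + 1 by ring, rpow_add_one ht.ne', mul_comm]
  simp only [reducedDeriv, hpow, mul_sub, Finset.mul_sum]
  congr 1
  · ring
  · exact Finset.sum_congr rfl fun i _ => by ring

theorem hasDerivAt_reducedDeriv {t : ℝ} (ht : 0 < t) :
    HasDerivAt (reducedDeriv s a k γ) (scaledDerivReducedDeriv s k γ t / t) t := by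
  have hsum := HasDerivAt.fun_sum fun i (_ : i ∈ s) =>
    (hasDerivAt_rpow_const (p := γ i - 2) (Or.inl ht.ne')).const_mul (k i * γ i)
  refine ((hasDerivAt_const t (2 * a)).sub hsum).congr_deriv ?_
  simp only [scaledDerivReducedDeriv, rpow_sub_one ht.ne', Finset.sum_div, zero_sub,
    ← Finset.sum_neg_distrib]
  exact Finset.sum_congr rfl fun i _ => by ring

theorem strictAntiOn_scaledDerivReducedDeriv (hkγ : ∀ i ∈ s, 0 ≤ k i * γ i)
    (hstrict : ∃ i ∈ s, 0 < k i * γ i ∧ γ i ≠ 2) :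
    StrictAntiOn (scaledDerivReducedDeriv s k γ) (Ioi 0) := by
  intro x hx y hy hxy
  have hce : ∀ i, k i * γ i * (2 - γ i) * (γ i - 2) = -(k i * γ i * (γ i - 2) ^ 2) := fun i => by
    ring
  refine Finset.sum_lt_sum (fun i hi => antitoneOn_const_mul_rpow ?_ hx hy hxy.le) ?_
  · rw [hce, neg_nonpos]
    exact mul_nonneg (hkγ i hi) (sq_nonneg _)
  · obtain ⟨i, hi, hpos, hne⟩ := hstrict
    refine ⟨i, hi, strictAntiOn_const_mul_rpow ?_ hx hy hxy⟩
    rw [hce, neg_neg_iff_pos]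
    exact mul_pos hpos (sq_pos_of_ne_zero (sub_ne_zero.2 hne))

theorem encard_critical_points_le_two (hkγ : ∀ i ∈ s, 0 ≤ k i * γ i)
    (hstrict : ∃ i ∈ s, 0 < k i * γ i ∧ γ i ≠ 2) :
    {t : ℝ | 0 < t ∧ deriv (fun t => a * t ^ 2 - ∑ i ∈ s, k i * t ^ γ i) t = 0}.encard ≤ 2 := by
  have hzeros' : {t ∈ Ioi 0 | scaledDerivReducedDeriv s k γ t / t = 0}.encard ≤ 1 := by
    refine encard_le_one_iff.2 fun x y hx hy => ?_
    refine (strictAntiOn_scaledDerivReducedDeriv hkγ hstrict).injOn hx.1 hy.1 ?_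
    rw [(div_eq_zero_iff.1 hx.2).resolve_right hx.1.ne',
      (div_eq_zero_iff.1 hy.2).resolve_right hy.1.ne']
  calc _ ≤ {t ∈ Ioi 0 | reducedDeriv s a k γ t = 0}.encard := by
        refine encard_le_encard fun t ⟨ht, hdt⟩ => ⟨ht, ?_⟩
        rw [(hasDerivAt_sub_sum ht).deriv] at hdt
        exact (mul_eq_zero.1 hdt).resolve_left ht.ne'
    _ ≤ {t ∈ Ioi 0 | scaledDerivReducedDeriv s k γ t / t = 0}.encard + 1 :=
        encard_zeros_le_encard_deriv_zeros_add_one ordConnected_Ioi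
          fun t ht => hasDerivAt_reducedDeriv ht
    _ ≤ 2 := by
        grw [hzeros']
        rfl

end PowerCombination

theorem stmt_4_general (N : ℕ) (hN : 3 ≤ N) (p q r : ℝ)
    (hp : 2 < p) (hNq : 2 + 4 / (N : ℝ) < q)
    (hr : 2 < r) (a b c d : ℝ)
    (hb : 0 < b) (hc : 0 < c) (hd : 0 < d) :
    {t : ℝ | 0 < t ∧
      deriv (fun t : ℝ => a * t ^ 2 - b * t ^ (gam N r)
        - c * t ^ (gam N p) - d * t ^ (gam N q)) t = 0}.encard ≤ 2 := by
  have hN0 : (0 : ℝ) < N := Nat.cast_pos.2 (by omega)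
  have gam_pos : ∀ s, 2 < s → 0 < gam N s := fun s hs =>
    div_pos (mul_pos hN0 (sub_pos.2 hs)) two_pos
  have hγq : 2 < gam N q := by
    have := (div_lt_iff₀ hN0).1 (lt_sub_iff_add_lt'.2 hNq)
    unfold gam
    linarith
  have hγq_pos : 0 < gam N q := two_pos.trans hγq
  have hl : (fun t : ℝ => a * t ^ 2 - b * t ^ gam N r - c * t ^ gam N p - d * t ^ gam N q) =
      fun t => a * t ^ 2 - ∑ i, ![b, c, d] i * t ^ ![gam N r, gam N p, gam N q] i := by
    funext t
    simp only [Fin.sum_univ_three, Matrix.cons_val]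
    ring
  rw [hl]
  refine PowerCombination.encard_critical_points_le_two (by simp [Fin.forall_fin_succ,
    (mul_pos hb (gam_pos r hr)).le, (mul_pos hc (gam_pos p hp)).le,
    (mul_pos hd hγq_pos).le]) ⟨2, Finset.mem_univ _, ?_⟩
  simpa using ⟨mul_pos hd hγq_pos, hγq.ne'⟩

theorem stmt_4 (N : ℕ) (hN : 3 ≤ N) (p q r : ℝ)
    (hp : 2 < p) (hpN : p < 2 + 4 / (N : ℝ)) (hNq : 2 + 4 / (N : ℝ) < q)
    (hq : q ≤ twoStar N) (hr : 2 < r) (hr2 : r < twoStar N) (a b c d : ℝ)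
    (ha : 0 < a) (hb : 0 < b) (hc : 0 < c) (hd : 0 < d) :
    {t : ℝ | 0 < t ∧
      deriv (fun t : ℝ => a * t ^ 2 - b * t ^ (gam N r)
        - c * t ^ (gam N p) - d * t ^ (gam N q)) t = 0}.encard ≤ 2 :=
  stmt_4_general N hN p q r hp hNq hr a b c d hb hc hd
end

section
/- Let N ≥ 3, 2 < p < 2 + 4/N < q < 2*, 2 < r ≤ 2*, and let A, B, C, D > 0. Define Φ(t) = (1/2)A t² − B t^{γ_p} − C t^{γ_q} − D t^{γ_r} for t ∈ (0,∞). If Φ(t₀) > 0 for some t₀ > 0, then Φ has exactly two critical points 0 < s < τ in (0,∞); moreover Φ''(s) > 0 and Φ''(τ) < 0, Φ(s) < 0 < Φ(τ), Φ(s) = min{Φ(t) : 0 < t ≤ τ}, and Φ(τ) = max{Φ(t) : t > 0}. -/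
open Real

/-!
Write `Φ'(t) = t h(t)` with `h(t) = A - aB t^(a-2) - bC t^(b-2) - cD t^(c-2)`. Every term
`K γ t^γ` with `K ≥ 0` is nondecreasing on `(0, ∞)`, strictly so for the `B`-term since `a ≠ 2`;
hence `ψ(t) = t h'(t) = -Σ K γ t^γ` is strictly decreasing. Between two zeros `s < τ` of `h`
Rolle's theorem produces a zero of `ψ`, so `ψ(s) > 0 > ψ(τ)`, and a third zero of `h` would make
`ψ` change sign twice: `h` has at most two zeros. On the other hand `Φ(0) = 0`, `Φ < 0` near `0`
(as `a < 2`) and near `∞` (as `b > 2`), and `Φ(t₀) > 0`; so `Φ` attains a positive maximum on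
`(0, ∞)` at some `τ` and a negative minimum on `[0, τ]` at some `s ∈ (0, τ)`. These are zeros of
`h`, hence the only ones, and `Φ'' = h + ψ` equals `ψ` there.
-/

open Set Filter Topology

theorem strictMonoOn_mul_mul_rpow {K γ : ℝ} (hK : 0 < K) (hγ : γ ≠ 0) :
    StrictMonoOn (fun t : ℝ => K * γ * t ^ γ) (Ioi 0) := by
  intro x (hx : 0 < x) y _ hxy
  rcases hγ.lt_or_gt with hneg | hpos
  · exact mul_lt_mul_of_neg_left (rpow_lt_rpow_of_neg hx hxy hneg) (mul_neg_of_pos_of_neg hK hneg)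
  · exact mul_lt_mul_of_pos_left (rpow_lt_rpow hx.le hxy hpos) (mul_pos hK hpos)

theorem monotoneOn_mul_mul_rpow {K γ : ℝ} (hK : 0 ≤ K) :
    MonotoneOn (fun t : ℝ => K * γ * t ^ γ) (Ioi 0) := by
  rcases hK.eq_or_lt with rfl | hK
  · simpa using monotoneOn_const
  rcases eq_or_ne γ 0 with rfl | hγ
  · simpa using monotoneOn_const
  exact (strictMonoOn_mul_mul_rpow hK hγ).monotoneOn

section TwoZeros

variable {h ψ : ℝ → ℝ}

theorem pos_and_neg_of_two_zeros (hh : ∀ t, 0 < t → HasDerivAt h (ψ t / t) t)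
    (hψ : StrictAntiOn ψ (Ioi 0)) {s τ : ℝ} (hs : 0 < s) (hsτ : s < τ) (hs0 : h s = 0)
    (hτ0 : h τ = 0) : 0 < ψ s ∧ ψ τ < 0 := by
  obtain ⟨u, ⟨hsu, huτ⟩, hu⟩ := exists_hasDerivAt_eq_zero hsτ
    (fun u hu => (hh u (hs.trans_le hu.1)).continuousAt.continuousWithinAt) (hs0.trans hτ0.symm)
    (fun u hu => hh u (hs.trans hu.1))
  have hψu : ψ u = 0 := (div_eq_zero_iff.1 hu).resolve_right (hs.trans hsu).ne'
  exact ⟨hψu ▸ hψ hs (hs.trans hsu) hsu, hψu ▸ hψ (hs.trans hsu) (hs.trans hsτ) huτ⟩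

theorem eq_or_eq_of_zero (hh : ∀ t, 0 < t → HasDerivAt h (ψ t / t) t)
    (hψ : StrictAntiOn ψ (Ioi 0)) {s τ : ℝ} (hs : 0 < s) (hsτ : s < τ) (hs0 : h s = 0)
    (hτ0 : h τ = 0) {t : ℝ} (ht : 0 < t) (ht0 : h t = 0) : t = s ∨ t = τ := by
  have sign := @pos_and_neg_of_two_zeros h ψ hh hψ
  rcases lt_trichotomy t s with hts | rfl | hst
  · linarith [(sign ht hts ht0 hs0).2, (sign hs hsτ hs0 hτ0).1]
  · exact .inl rfl
  rcases lt_trichotomy t τ with htτ | rfl | hτt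
  · linarith [(sign hs hst hs0 ht0).2, (sign ht htτ ht0 hτ0).1]
  · exact .inr rfl
  · linarith [(sign hs hsτ hs0 hτ0).2, (sign (hs.trans hsτ) hτt hτ0 ht0).1]

end TwoZeros

theorem exists_mem_Ioo_isMaxOn_Icc {f : ℝ → ℝ} {a b t : ℝ} (hf : ContinuousOn f (Icc a b))
    (ha : f a ≤ 0) (hb : f b ≤ 0) (ht : t ∈ Icc a b) (hft : 0 < f t) :
    ∃ τ ∈ Ioo a b, 0 < f τ ∧ IsMaxOn f (Icc a b) τ := by
  obtain ⟨τ, hτ, hmax⟩ := isCompact_Icc.exists_isMaxOn ⟨t, ht⟩ hf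
  have hfτ : 0 < f τ := hft.trans_le (hmax ht)
  refine ⟨τ, ⟨hτ.1.lt_of_ne ?_, hτ.2.lt_of_ne ?_⟩, hfτ, hmax⟩ <;> rintro rfl <;> linarith

theorem exists_mem_Ioo_isMinOn_Icc {f : ℝ → ℝ} {a b t : ℝ} (hf : ContinuousOn f (Icc a b))
    (ha : 0 ≤ f a) (hb : 0 ≤ f b) (ht : t ∈ Icc a b) (hft : f t < 0) :
    ∃ s ∈ Ioo a b, f s < 0 ∧ IsMinOn f (Icc a b) s := by
  obtain ⟨s, hs, hfs, hmax⟩ := exists_mem_Ioo_isMaxOn_Icc hf.neg (neg_nonpos.2 ha)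
    (neg_nonpos.2 hb) ht (neg_pos.2 hft)
  exact ⟨s, hs, neg_pos.1 hfs, fun x hx => show f s ≤ f x from neg_le_neg_iff.1 (hmax hx)⟩

noncomputable def fiberMap (A B C D a b c t : ℝ) : ℝ :=
  (1 / 2) * A * t ^ 2 - B * t ^ a - C * t ^ b - D * t ^ c

/-- `Φ'(t) = t * fiberQuot t` for the fiber map `Φ`. -/
noncomputable def fiberQuot (A B C D a b c t : ℝ) : ℝ :=
  A - B * a * t ^ (a - 2) - C * b * t ^ (b - 2) - D * c * t ^ (c - 2)

/-- `t * h'(t)` for `h = fiberQuot`, i.e. the derivative of `h` with respect to `log t`. -/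
noncomputable def fiberQuotEuler (B C D a b c t : ℝ) : ℝ :=
  -(B * a * (a - 2) * t ^ (a - 2) + C * b * (b - 2) * t ^ (b - 2)
    + D * c * (c - 2) * t ^ (c - 2))

section FiberMap

variable {A B C D a b c t : ℝ}

theorem hasDerivAt_fiberMap (ht : 0 < t) :
    HasDerivAt (fiberMap A B C D a b c) (t * fiberQuot A B C D a b c t) t := by
  have hpow (γ : ℝ) : HasDerivAt (fun x : ℝ => x ^ γ) (γ * t ^ (γ - 2) * t) t := by
    convert hasDerivAt_rpow_const (p := γ) (Or.inl ht.ne') using 1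
    rw [show γ - 1 = γ - 2 + 1 by ring, rpow_add_one ht.ne', mul_assoc]
  refine ((((hasDerivAt_pow 2 t).const_mul ((1 / 2) * A)).sub ((hpow a).const_mul B)).sub
    ((hpow b).const_mul C)).sub ((hpow c).const_mul D) |>.congr_deriv ?_
  simp only [fiberQuot]
  ring

theorem hasDerivAt_fiberQuot (ht : 0 < t) :
    HasDerivAt (fiberQuot A B C D a b c) (fiberQuotEuler B C D a b c t / t) t := by
  have hpow (γ : ℝ) :
      HasDerivAt (fun x : ℝ => x ^ (γ - 2)) ((γ - 2) * t ^ (γ - 2) / t) t := by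
    convert hasDerivAt_rpow_const (p := γ - 2) (Or.inl ht.ne') using 1
    rw [rpow_sub_one ht.ne', mul_div_assoc]
  refine (((hasDerivAt_const t A).sub ((hpow a).const_mul (B * a))).sub
    ((hpow b).const_mul (C * b))).sub ((hpow c).const_mul (D * c)) |>.congr_deriv ?_
  simp only [fiberQuotEuler]
  ring

theorem deriv_fiberMap_eq_zero_iff (ht : 0 < t) :
    deriv (fiberMap A B C D a b c) t = 0 ↔ fiberQuot A B C D a b c t = 0 := by
  rw [(hasDerivAt_fiberMap ht).deriv, mul_eq_zero, or_iff_right ht.ne']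

theorem deriv_deriv_fiberMap (ht : 0 < t) :
    deriv (deriv (fiberMap A B C D a b c)) t
      = fiberQuot A B C D a b c t + fiberQuotEuler B C D a b c t := by
  have hderiv : deriv (fiberMap A B C D a b c) =ᶠ[𝓝 t] fun u => u * fiberQuot A B C D a b c u :=
    eventually_of_mem (Ioi_mem_nhds ht) fun u hu => (hasDerivAt_fiberMap hu).deriv
  have hprod : HasDerivAt (fun u => u * fiberQuot A B C D a b c u)
      (1 * fiberQuot A B C D a b c t + t * (fiberQuotEuler B C D a b c t / t)) t :=
    (hasDerivAt_id' t).mul (hasDerivAt_fiberQuot ht)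
  rw [hderiv.deriv_eq, hprod.deriv, one_mul, mul_div_cancel₀ _ ht.ne']

theorem strictAntiOn_fiberQuotEuler (hB : 0 < B) (ha : 0 < a) (ha2 : a ≠ 2) (hC : 0 ≤ C)
    (hb : 0 ≤ b) (hD : 0 ≤ D) (hc : 0 ≤ c) :
    StrictAntiOn (fiberQuotEuler B C D a b c) (Ioi 0) :=
  (((strictMonoOn_mul_mul_rpow (mul_pos hB ha) (sub_ne_zero.2 ha2)).add_monotone
    (monotoneOn_mul_mul_rpow (mul_nonneg hC hb))).add_monotone
    (monotoneOn_mul_mul_rpow (mul_nonneg hD hc))).neg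

theorem fiberMap_zero (ha : a ≠ 0) (hb : b ≠ 0) (hc : c ≠ 0) : fiberMap A B C D a b c 0 = 0 := by
  simp [fiberMap, zero_rpow ha, zero_rpow hb, zero_rpow hc]

theorem continuous_fiberMap (ha : 0 ≤ a) (hb : 0 ≤ b) (hc : 0 ≤ c) :
    Continuous (fiberMap A B C D a b c) :=
  (((continuous_const.mul (continuous_pow 2)).sub
    (continuous_const.mul (continuous_rpow_const ha))).sub
    (continuous_const.mul (continuous_rpow_const hb))).sub
    (continuous_const.mul (continuous_rpow_const hc))

theorem mul_sq_le_mul_rpow {K γ : ℝ} (ht : 0 < t) (h : A ≤ K * t ^ (γ - 2)) :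
    A * t ^ 2 ≤ K * t ^ γ :=
  calc A * t ^ 2 ≤ K * t ^ (γ - 2) * t ^ 2 := by gcongr
    _ = K * t ^ γ := by rw [mul_assoc, ← rpow_natCast, ← rpow_add ht]; norm_num

theorem fiberMap_neg (hA : 0 < A) (hB : 0 ≤ B) (hC : 0 ≤ C) (hD : 0 ≤ D) (ht : 0 < t)
    (h : A * t ^ 2 ≤ B * t ^ a ∨ A * t ^ 2 ≤ C * t ^ b) : fiberMap A B C D a b c t < 0 := by
  have := mul_pos hA (pow_pos ht 2)
  have := mul_nonneg hB (rpow_nonneg ht.le a)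
  have := mul_nonneg hC (rpow_nonneg ht.le b)
  have := mul_nonneg hD (rpow_nonneg ht.le c)
  unfold fiberMap
  rcases h with h | h <;> linarith

theorem eventually_fiberMap_neg_atTop (hA : 0 < A) (hB : 0 ≤ B) (hC : 0 < C) (hD : 0 ≤ D)
    (hb : 2 < b) : ∀ᶠ t in atTop, fiberMap A B C D a b c t < 0 := by
  filter_upwards [(tendsto_rpow_atTop (sub_pos.2 hb)).eventually_ge_atTop (A / C),
    eventually_gt_atTop 0] with t hle ht
  exact fiberMap_neg hA hB hC.le hD ht (.inr (mul_sq_le_mul_rpow ht ((div_le_iff₀' hC).1 hle)))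

theorem eventually_fiberMap_neg_nhdsGT_zero (hA : 0 < A) (hB : 0 < B) (hC : 0 ≤ C) (hD : 0 ≤ D)
    (ha : a < 2) : ∀ᶠ t in 𝓝[>] 0, fiberMap A B C D a b c t < 0 := by
  filter_upwards [(tendsto_rpow_neg_nhdsGT_zero (sub_neg.2 ha)).eventually_ge_atTop (A / B),
    self_mem_nhdsWithin] with t hle (ht : 0 < t)
  exact fiberMap_neg hA hB.le hC hD ht (.inl (mul_sq_le_mul_rpow ht ((div_le_iff₀' hB).1 hle)))

theorem fiberMap_two_critical_points (hA : 0 < A) (hB : 0 < B) (hC : 0 < C) (hD : 0 ≤ D)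
    (ha : 0 < a) (ha2 : a < 2) (hb : 2 < b) (hc : 0 < c) {t₀ : ℝ} (ht₀ : 0 < t₀)
    (hpos : 0 < fiberMap A B C D a b c t₀) :
    ∃ s τ : ℝ, 0 < s ∧ s < τ ∧
      (∀ t : ℝ, 0 < t → (deriv (fiberMap A B C D a b c) t = 0 ↔ t = s ∨ t = τ)) ∧
      0 < deriv (deriv (fiberMap A B C D a b c)) s ∧
      deriv (deriv (fiberMap A B C D a b c)) τ < 0 ∧
      fiberMap A B C D a b c s < 0 ∧ 0 < fiberMap A B C D a b c τ ∧
      (∀ t : ℝ, 0 < t → t ≤ τ → fiberMap A B C D a b c s ≤ fiberMap A B C D a b c t) ∧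
      (∀ t : ℝ, 0 < t → fiberMap A B C D a b c t ≤ fiberMap A B C D a b c τ) := by
  set Φ := fiberMap A B C D a b c
  have hb0 : 0 < b := by linarith
  have hcont : Continuous Φ := continuous_fiberMap ha.le hb0.le hc.le
  have hΦ0 : Φ 0 = 0 := fiberMap_zero ha.ne' hb0.ne' hc.ne'
  obtain ⟨T, hT⟩ := ((eventually_fiberMap_neg_atTop hA hB.le hC hD hb).and
    (eventually_ge_atTop t₀)).exists_forall_of_atTop
  obtain ⟨τ, ⟨hτ, -⟩, hΦτ, hτmax⟩ := exists_mem_Ioo_isMaxOn_Icc hcont.continuousOn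
    hΦ0.le (hT T le_rfl).1.le ⟨ht₀.le, (hT T le_rfl).2⟩ hpos
  have hτmax' : IsMaxOn Φ (Ioi 0) τ := fun t (ht : 0 < t) =>
    (le_or_gt t T).elim (fun htT => hτmax ⟨ht.le, htT⟩) fun hTt => ((hT t hTt.le).1.trans hΦτ).le
  obtain ⟨t₁, ht₁, ht₁τ⟩ := ((eventually_fiberMap_neg_nhdsGT_zero hA hB hC.le hD ha2).and
    (Ioo_mem_nhdsGT hτ)).exists
  obtain ⟨s, ⟨hs, hsτ⟩, hΦs, hsmin⟩ := exists_mem_Ioo_isMinOn_Icc hcont.continuousOn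
    hΦ0.ge hΦτ.le (Ioo_subset_Icc_self ht₁τ) ht₁
  have hqτ : fiberQuot A B C D a b c τ = 0 :=
    (deriv_fiberMap_eq_zero_iff hτ).1 (hτmax'.isLocalMax (Ioi_mem_nhds hτ)).deriv_eq_zero
  have hqs : fiberQuot A B C D a b c s = 0 :=
    (deriv_fiberMap_eq_zero_iff hs).1 (hsmin.isLocalMin (Icc_mem_nhds hs hsτ)).deriv_eq_zero
  have hq : ∀ t, 0 < t →
      HasDerivAt (fiberQuot A B C D a b c) (fiberQuotEuler B C D a b c t / t) t :=
    fun _ => hasDerivAt_fiberQuot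
  have hψ := strictAntiOn_fiberQuotEuler hB ha ha2.ne hC.le hb0.le hD hc.le
  obtain ⟨hψs, hψτ⟩ := pos_and_neg_of_two_zeros hq hψ hs hsτ hqs hqτ
  refine ⟨s, τ, hs, hsτ, fun t ht => ?_, ?_, ?_, hΦs, hΦτ, fun t ht htτ => hsmin ⟨ht.le, htτ⟩,
    fun t ht => hτmax' ht⟩
  · rw [deriv_fiberMap_eq_zero_iff ht]
    refine ⟨eq_or_eq_of_zero hq hψ hs hsτ hqs hqτ ht, ?_⟩
    rintro (rfl | rfl) <;> assumption
  · rwa [deriv_deriv_fiberMap hs, hqs, zero_add]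
  · rwa [deriv_deriv_fiberMap hτ, hqτ, zero_add]

end FiberMap

theorem gam_pos {N : ℕ} {s : ℝ} (hN : 0 < N) (hs : 2 < s) : 0 < gam N s :=
  div_pos (mul_pos (Nat.cast_pos.2 hN) (sub_pos.2 hs)) two_pos

theorem gam_lt_two_iff {N : ℕ} {s : ℝ} (hN : 0 < N) : gam N s < 2 ↔ s < 2 + 4 / N := by
  have hN' : (0 : ℝ) < N := Nat.cast_pos.2 hN
  rw [gam, div_lt_iff₀ two_pos, ← sub_lt_iff_lt_add', lt_div_iff₀ hN', mul_comm]
  norm_num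

theorem two_lt_gam_iff {N : ℕ} {s : ℝ} (hN : 0 < N) : 2 < gam N s ↔ 2 + 4 / N < s := by
  have hN' : (0 : ℝ) < N := Nat.cast_pos.2 hN
  rw [gam, lt_div_iff₀ two_pos, ← lt_sub_iff_add_lt', div_lt_iff₀ hN', mul_comm (s - 2)]
  norm_num

theorem stmt_5_general (N : ℕ) (hN : 3 ≤ N) (p q r A B C D : ℝ)
    (hp : 2 < p) (hpN : p < 2 + 4 / (N : ℝ)) (hNq : 2 + 4 / (N : ℝ) < q)
    (hr : 2 < r)
    (hA : 0 < A) (hB : 0 < B) (hC : 0 < C) (hD : 0 < D)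
    (Φ : ℝ → ℝ)
    (hΦ : Φ = fun t : ℝ => (1 / 2) * A * t ^ 2 - B * t ^ (gam N p)
      - C * t ^ (gam N q) - D * t ^ (gam N r))
    (t₀ : ℝ) (ht₀ : 0 < t₀) (hpos : 0 < Φ t₀) :
    ∃ s τ : ℝ, 0 < s ∧ s < τ ∧
      (∀ t : ℝ, 0 < t → (deriv Φ t = 0 ↔ t = s ∨ t = τ)) ∧
      0 < deriv (deriv Φ) s ∧ deriv (deriv Φ) τ < 0 ∧
      Φ s < 0 ∧ 0 < Φ τ ∧
      (∀ t : ℝ, 0 < t → t ≤ τ → Φ s ≤ Φ t) ∧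
      (∀ t : ℝ, 0 < t → Φ t ≤ Φ τ) := by
  have hN0 : 0 < N := by omega
  obtain rfl : Φ = fiberMap A B C D (gam N p) (gam N q) (gam N r) := hΦ
  exact fiberMap_two_critical_points hA hB hC hD.le (gam_pos hN0 hp) ((gam_lt_two_iff hN0).2 hpN)
    ((two_lt_gam_iff hN0).2 hNq) (gam_pos hN0 hr) ht₀ hpos

theorem stmt_5 (N : ℕ) (hN : 3 ≤ N) (p q r A B C D : ℝ)
    (hp : 2 < p) (hpN : p < 2 + 4 / (N : ℝ)) (hNq : 2 + 4 / (N : ℝ) < q)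
    (hq : q < twoStar N) (hr : 2 < r) (hr2 : r ≤ twoStar N)
    (hA : 0 < A) (hB : 0 < B) (hC : 0 < C) (hD : 0 < D)
    (Φ : ℝ → ℝ)
    (hΦ : Φ = fun t : ℝ => (1 / 2) * A * t ^ 2 - B * t ^ (gam N p)
      - C * t ^ (gam N q) - D * t ^ (gam N r))
    (t₀ : ℝ) (ht₀ : 0 < t₀) (hpos : 0 < Φ t₀) :
    ∃ s τ : ℝ, 0 < s ∧ s < τ ∧
      (∀ t : ℝ, 0 < t → (deriv Φ t = 0 ↔ t = s ∨ t = τ)) ∧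
      0 < deriv (deriv Φ) s ∧ deriv (deriv Φ) τ < 0 ∧
      Φ s < 0 ∧ 0 < Φ τ ∧
      (∀ t : ℝ, 0 < t → t ≤ τ → Φ s ≤ Φ t) ∧
      (∀ t : ℝ, 0 < t → Φ t ≤ Φ τ) :=
  stmt_5_general N hN p q r A B C D hp hpN hNq hr hA hB hC hD Φ hΦ t₀ ht₀ hpos
end

section
/- Let α > 1, β > 1 with α + β > 3, and let 0 < L₁ ≤ L₂ < ∞. Then there exist constants A₁ > 0 and A₂ > 0 such that for all t₁, t₂ ∈ [L₁, L₂] and all s ≥ 0: (t₁+s)^α (t₂+s)^β − t₁^α t₂^β − s^{α+β} − α t₁^{α−1} t₂^β s − β t₂^{β−1} t₁^α s ≥ A₁ s^{α+β−1} − A₂ s². -/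
open Real

/-- Bernoulli-type inequality: `t^p + p t^(p-1) s ≤ (t+s)^p` for `t > 0`, `s ≥ 0`, `p ≥ 1`. -/
lemma bern_aux (t s p : ℝ) (ht : 0 < t) (hs : 0 ≤ s) (hp : 1 ≤ p) :
    t ^ p + p * t ^ (p - 1) * s ≤ (t + s) ^ p := by
  have hst : (0:ℝ) ≤ s / t := div_nonneg hs ht.le
  have h1 : 1 + p * (s / t) ≤ (1 + s / t) ^ p :=
    one_add_mul_self_le_rpow_one_add (by linarith) hp
  have ht0 : t ≠ 0 := ht.ne'
  have heq : t + s = t * (1 + s / t) := by field_simp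
  have h2 : (t + s) ^ p = t ^ p * (1 + s / t) ^ p := by
    rw [heq, Real.mul_rpow ht.le (by linarith)]
  have h3 : t ^ p * (1 + p * (s / t)) ≤ t ^ p * (1 + s / t) ^ p :=
    mul_le_mul_of_nonneg_left h1 (Real.rpow_nonneg ht.le p)
  have h4 : t ^ (p - 1) = t ^ p / t := by
    rw [Real.rpow_sub ht, Real.rpow_one]
  have h5 : t ^ p * (1 + p * (s / t)) = t ^ p + p * t ^ (p - 1) * s := by
    rw [h4]; field_simp
  rw [h2]; rw [h5] at h3; exact h3

set_option maxHeartbeats 2000000 in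
theorem stmt_11 (α β L₁ L₂ : ℝ) (hα : 1 < α) (hβ : 1 < β) (hαβ : 3 < α + β)
    (hL₁ : 0 < L₁) (hL : L₁ ≤ L₂) :
    ∃ A₁ : ℝ, 0 < A₁ ∧ ∃ A₂ : ℝ, 0 < A₂ ∧
      ∀ t₁ t₂ s : ℝ, t₁ ∈ Set.Icc L₁ L₂ → t₂ ∈ Set.Icc L₁ L₂ → 0 ≤ s →
        A₁ * s ^ (α + β - 1) - A₂ * s ^ 2 ≤
          (t₁ + s) ^ α * (t₂ + s) ^ β - t₁ ^ α * t₂ ^ β - s ^ (α + β)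
            - α * t₁ ^ (α - 1) * t₂ ^ β * s - β * t₂ ^ (β - 1) * t₁ ^ α * s := by
  have hL₂ : 0 < L₂ := lt_of_lt_of_le hL₁ hL
  set C : ℝ := L₂ ^ α * L₂ ^ β + α * L₂ ^ (α - 1) * L₂ ^ β + β * L₂ ^ (β - 1) * L₂ ^ α
    with hC_def
  have hC : 0 < C := by
    have h1 : (0:ℝ) < L₂ ^ α := Real.rpow_pos_of_pos hL₂ α
    have h2 : (0:ℝ) < L₂ ^ β := Real.rpow_pos_of_pos hL₂ β
    have h3 : (0:ℝ) < L₂ ^ (α - 1) := Real.rpow_pos_of_pos hL₂ _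
    have h4 : (0:ℝ) < L₂ ^ (β - 1) := Real.rpow_pos_of_pos hL₂ _
    have : (0:ℝ) < α := by linarith
    have : (0:ℝ) < β := by linarith
    positivity
  refine ⟨β * L₁, by positivity, β * L₁ + 1 + 2 * C, by positivity, ?_⟩
  rintro t₁ t₂ s ⟨h11, h12⟩ ⟨h21, h22⟩ hs
  have ht₁ : 0 < t₁ := lt_of_lt_of_le hL₁ h11
  have ht₂ : 0 < t₂ := lt_of_lt_of_le hL₁ h21
  have hα1 : (1:ℝ) ≤ α := hα.le
  have hβ1 : (1:ℝ) ≤ β := hβ.le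
  -- first-order lower bound (convexity / Bernoulli)
  have key1 : t₁ ^ α * t₂ ^ β + α * t₁ ^ (α - 1) * t₂ ^ β * s
      + β * t₂ ^ (β - 1) * t₁ ^ α * s ≤ (t₁ + s) ^ α * (t₂ + s) ^ β := by
    have b1 := bern_aux t₁ s α ht₁ hs hα1
    have b2 := bern_aux t₂ s β ht₂ hs hβ1
    have n1 : (0:ℝ) ≤ t₁ ^ α := (Real.rpow_pos_of_pos ht₁ α).le
    have n2 : (0:ℝ) ≤ t₂ ^ β := (Real.rpow_pos_of_pos ht₂ β).le
    have n3 : (0:ℝ) ≤ α * t₁ ^ (α - 1) * s := by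
      have := (Real.rpow_pos_of_pos ht₁ (α - 1)).le
      positivity
    have n4 : (0:ℝ) ≤ β * t₂ ^ (β - 1) * s := by
      have := (Real.rpow_pos_of_pos ht₂ (β - 1)).le
      positivity
    have hmul : (t₁ ^ α + α * t₁ ^ (α - 1) * s) * (t₂ ^ β + β * t₂ ^ (β - 1) * s)
        ≤ (t₁ + s) ^ α * (t₂ + s) ^ β := by
      apply mul_le_mul b1 b2 (by linarith) (Real.rpow_nonneg (by linarith) α)
    nlinarith [mul_nonneg n3 n4]
  rcases le_or_gt s 1 with hs1 | hs1
  · -- small s : use F ≥ -s^(α+β) and s^(α+β) ≤ s², s^(α+β-1) ≤ s²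
    rcases eq_or_lt_of_le hs with rfl | hs0
    · have e1 : (0:ℝ) ^ (α + β - 1) = 0 := Real.zero_rpow (by linarith)
      have e2 : (0:ℝ) ^ (α + β) = 0 := Real.zero_rpow (by linarith)
      simp only [e1, e2] at *
      nlinarith [key1]
    · have e1 : s ^ (α + β - 1) ≤ s ^ (2:ℝ) :=
        Real.rpow_le_rpow_of_exponent_ge hs0 hs1 (by linarith)
      have e2 : s ^ (α + β) ≤ s ^ (2:ℝ) :=
        Real.rpow_le_rpow_of_exponent_ge hs0 hs1 (by linarith)
      have e3 : s ^ (2:ℝ) = s ^ 2 := by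
        rw [show (2:ℝ) = ((2:ℕ):ℝ) by norm_num, Real.rpow_natCast]
      rw [e3] at e1 e2
      have hsq : (0:ℝ) ≤ s ^ 2 := sq_nonneg s
      have hbl : (0:ℝ) < β * L₁ := by positivity
      nlinarith [key1]
  · -- large s : use the bound (t₁+s)^α (t₂+s)^β ≥ s^(α+β) + β t₂ s^(α+β-1)
    have hs0 : (0:ℝ) < s := by linarith
    have b2 : s ^ β + β * s ^ (β - 1) * t₂ ≤ (t₂ + s) ^ β := by
      have := bern_aux s t₂ β hs0 ht₂.le hβ1
      rwa [show s + t₂ = t₂ + s by ring] at this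
    have b1 : s ^ α ≤ (t₁ + s) ^ α :=
      Real.rpow_le_rpow hs0.le (by linarith) (by linarith)
    have key2 : s ^ α * (s ^ β + β * s ^ (β - 1) * t₂) ≤ (t₁ + s) ^ α * (t₂ + s) ^ β := by
      apply mul_le_mul b1 b2 ?_ (Real.rpow_nonneg (by linarith) α)
      have := (Real.rpow_pos_of_pos hs0 β).le
      have := (Real.rpow_pos_of_pos hs0 (β - 1)).le
      positivity
    have eab : s ^ α * s ^ β = s ^ (α + β) := (Real.rpow_add hs0 α β).symm
    have eab1 : s ^ α * s ^ (β - 1) = s ^ (α + β - 1) := by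
      rw [← Real.rpow_add hs0]; ring_nf
    have key2' : s ^ (α + β) + β * t₂ * s ^ (α + β - 1) ≤ (t₁ + s) ^ α * (t₂ + s) ^ β := by
      calc s ^ (α + β) + β * t₂ * s ^ (α + β - 1)
          = s ^ α * (s ^ β + β * s ^ (β - 1) * t₂) := by
            rw [mul_add, eab, show s ^ α * (β * s ^ (β-1) * t₂) = β * t₂ * (s ^ α * s ^ (β-1)) by ring, eab1]
        _ ≤ _ := key2
    -- bound the subtracted terms by constants
    have m1 : t₁ ^ α ≤ L₂ ^ α := Real.rpow_le_rpow ht₁.le h12 (by linarith)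
    have m2 : t₂ ^ β ≤ L₂ ^ β := Real.rpow_le_rpow ht₂.le h22 (by linarith)
    have m3 : t₁ ^ (α - 1) ≤ L₂ ^ (α - 1) := Real.rpow_le_rpow ht₁.le h12 (by linarith)
    have m4 : t₂ ^ (β - 1) ≤ L₂ ^ (β - 1) := Real.rpow_le_rpow ht₂.le h22 (by linarith)
    have p1 : (0:ℝ) < t₁ ^ α := Real.rpow_pos_of_pos ht₁ α
    have p2 : (0:ℝ) < t₂ ^ β := Real.rpow_pos_of_pos ht₂ β
    have p3 : (0:ℝ) < t₁ ^ (α - 1) := Real.rpow_pos_of_pos ht₁ _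
    have p4 : (0:ℝ) < t₂ ^ (β - 1) := Real.rpow_pos_of_pos ht₂ _
    have q1 : (0:ℝ) < L₂ ^ α := Real.rpow_pos_of_pos hL₂ α
    have q2 : (0:ℝ) < L₂ ^ β := Real.rpow_pos_of_pos hL₂ β
    have hαpos : (0:ℝ) < α := by linarith
    have hβpos : (0:ℝ) < β := by linarith
    have hsub : t₁ ^ α * t₂ ^ β + α * t₁ ^ (α - 1) * t₂ ^ β * s
        + β * t₂ ^ (β - 1) * t₁ ^ α * s ≤ C + C * s := by
      have hb1 : t₁ ^ α * t₂ ^ β ≤ L₂ ^ α * L₂ ^ β :=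
        mul_le_mul m1 m2 p2.le q1.le
      have hb2 : α * t₁ ^ (α - 1) * t₂ ^ β ≤ α * L₂ ^ (α - 1) * L₂ ^ β := by
        rw [mul_assoc, mul_assoc]
        exact mul_le_mul_of_nonneg_left
          (mul_le_mul m3 m2 p2.le (Real.rpow_nonneg hL₂.le _)) hαpos.le
      have hb3 : β * t₂ ^ (β - 1) * t₁ ^ α ≤ β * L₂ ^ (β - 1) * L₂ ^ α := by
        rw [mul_assoc, mul_assoc]
        exact mul_le_mul_of_nonneg_left
          (mul_le_mul m4 m1 p1.le (Real.rpow_nonneg hL₂.le _)) hβpos.le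
      have hCnonneg : t₁ ^ α * t₂ ^ β ≤ C := by
        have : (0:ℝ) ≤ α * L₂ ^ (α-1) * L₂ ^ β := by positivity
        have : (0:ℝ) ≤ β * L₂ ^ (β-1) * L₂ ^ α := by positivity
        simp only [hC_def]; linarith
      have h2s : α * t₁ ^ (α - 1) * t₂ ^ β * s + β * t₂ ^ (β - 1) * t₁ ^ α * s ≤ C * s := by
        have : α * t₁ ^ (α - 1) * t₂ ^ β + β * t₂ ^ (β - 1) * t₁ ^ α ≤ C := by
          have : (0:ℝ) < L₂ ^ α * L₂ ^ β := by positivity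
          simp only [hC_def]; linarith
        calc α * t₁ ^ (α - 1) * t₂ ^ β * s + β * t₂ ^ (β - 1) * t₁ ^ α * s
            = (α * t₁ ^ (α - 1) * t₂ ^ β + β * t₂ ^ (β - 1) * t₁ ^ α) * s := by ring
          _ ≤ C * s := mul_le_mul_of_nonneg_right this hs0.le
      linarith
    have hr : (0:ℝ) ≤ s ^ (α + β - 1) := Real.rpow_nonneg hs0.le _
    have ht2L : β * L₁ * s ^ (α + β - 1) ≤ β * t₂ * s ^ (α + β - 1) := by
      exact mul_le_mul_of_nonneg_right
        (mul_le_mul_of_nonneg_left h21 hβpos.le) hr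
    -- final arithmetic : need C + C*s ≤ (β*L₁ + 1 + 2*C) * s^2
    have hsq : s ≤ s ^ 2 := le_self_pow₀ hs1.le (by norm_num)
    have hone : (1:ℝ) ≤ s ^ 2 := one_le_pow₀ hs1.le
    have hfin : C + C * s ≤ (β * L₁ + 1 + 2 * C) * s ^ 2 := by
      have e1 : C * s ≤ C * s ^ 2 := mul_le_mul_of_nonneg_left hsq hC.le
      have e2 : C * 1 ≤ C * s ^ 2 := mul_le_mul_of_nonneg_left hone hC.le
      have e3 : (0:ℝ) ≤ (β * L₁ + 1) * s ^ 2 := by positivity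
      nlinarith
    linarith [key2', hsub, ht2L, hfin]
end
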